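/- arXiv:1801.10381 — 12 statements merged into one kernel-verified Lean document; each statement's English description precedes it below -/
import Mathlib

section
/- Let (X_j)_{j≥1} be a ν-ergodic sequence (in the extended sense, so that the strong law of large numbers holds almost surely for every nonnegative measurable function, with limits taken in [0,∞]). Let (f_m)_{m≥1} be a non-decreasing sequence of measurable nonnegative real-valued functions on E converging pointwise to f. Then almost surely (1/m)·Σ_{j=1}^m f_m(X_j) → ∫ f dν as m → ∞, where the convergence holds in [0,∞], i.e. the result is valid whether ∫ f dν is finite or infinite. -/
open MeasureTheory Filter

/-- If `(X j)` is `ν`-ergodic in the extended sense (the strong law of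
large numbers holds almost surely for every nonnegative measurable function, with limits
in `[0,∞]`) and `(f m)` is a nondecreasing sequence of measurable nonnegative real-valued
functions converging pointwise to `flim`, then almost surely
`(1/m) ∑_{j<m} f m (X j) → ∫ flim dν`, the convergence holding in `[0,∞]`. -/
theorem stmt0
    {E : Type*} [MeasurableSpace E] (ν : Measure E) [IsProbabilityMeasure ν]
    {Ω : Type*} [MeasurableSpace Ω] (P : Measure Ω) [IsProbabilityMeasure P]
    (X : ℕ → Ω → E)
    (hX : ∀ φ : E → ENNReal, Measurable φ →
      ∀ᵐ ω ∂P, Tendsto (fun m => (∑ j ∈ Finset.range m, φ (X j ω)) / (m : ENNReal))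
        atTop (nhds (∫⁻ x, φ x ∂ν)))
    (f : ℕ → E → ℝ) (flim : E → ℝ)
    (hmeas : ∀ m, Measurable (f m))
    (hnonneg : ∀ m x, 0 ≤ f m x)
    (hmono : ∀ m x, f m x ≤ f (m + 1) x)
    (hlim : ∀ x, Tendsto (fun m => f m x) atTop (nhds (flim x))) :
    ∀ᵐ ω ∂P, Tendsto
      (fun (m : ℕ) => ENNReal.ofReal ((m : ℝ)⁻¹ * ∑ j ∈ Finset.range m, f m (X j ω)))
      atTop (nhds (∫⁻ x, ENNReal.ofReal (flim x) ∂ν)) := by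
  set g : ℕ → E → ENNReal := fun k x => ENNReal.ofReal (f k x) with hg
  have hgmeas : ∀ k, Measurable (g k) := fun k => (hmeas k).ennreal_ofReal
  have hflim_meas : Measurable flim :=
    measurable_of_tendsto_metrizable hmeas (tendsto_pi_nhds.mpr hlim)
  set G : E → ENNReal := fun x => ENNReal.ofReal (flim x) with hG
  have hGmeas : Measurable G := hflim_meas.ennreal_ofReal
  have hfmono : ∀ x, Monotone fun k => f k x := fun x =>
    monotone_nat_of_le_succ fun k => hmono k x
  have hgmono : Monotone g := fun k l hkl x => ENNReal.ofReal_le_ofReal (hfmono x hkl)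
  have hle : ∀ k x, f k x ≤ flim x := fun k x => (hfmono x).ge_of_tendsto (hlim x) k
  have hgG : ∀ x, (⨆ k, g k x) = G x := by
    intro x
    refine iSup_eq_of_tendsto (fun k l hkl => hgmono hkl x) ?_
    exact (ENNReal.continuous_ofReal.tendsto _).comp (hlim x)
  have hint : (⨆ k, ∫⁻ x, g k x ∂ν) = ∫⁻ x, G x ∂ν := by
    rw [← lintegral_iSup hgmeas hgmono]
    exact lintegral_congr fun x => hgG x
  filter_upwards [ae_all_iff.mpr fun k => hX (g k) (hgmeas k), hX G hGmeas] with ω h1 h2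
  have hS : (fun m : ℕ => ENNReal.ofReal ((m : ℝ)⁻¹ * ∑ j ∈ Finset.range m, f m (X j ω)))
      = fun m => (∑ j ∈ Finset.range m, g m (X j ω)) / m := by
    funext m
    rcases Nat.eq_zero_or_pos m with rfl | hm
    · simp
    · rw [ENNReal.ofReal_mul (by positivity),
        ENNReal.ofReal_sum_of_nonneg (fun j _ => hnonneg m _),
        ENNReal.ofReal_inv_of_pos (by exact_mod_cast hm),
        ENNReal.ofReal_natCast, ENNReal.div_eq_inv_mul]
  rw [hS]
  refine tendsto_of_le_liminf_of_limsup_le ?_ ?_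
  · rw [← hint]
    refine iSup_le fun k => ?_
    rw [← (h1 k).liminf_eq]
    refine liminf_le_liminf ?_
    filter_upwards [eventually_ge_atTop k] with m hm
    exact ENNReal.div_le_div_right (Finset.sum_le_sum fun j _ => hgmono hm _) _
  · rw [← h2.limsup_eq]
    refine limsup_le_limsup (Eventually.of_forall fun m => ?_)
    exact ENNReal.div_le_div_right
      (Finset.sum_le_sum fun j _ => ENNReal.ofReal_le_ofReal (hle m _)) _
end

section
/- Let (X_j)_{j≥1} be a ν-ergodic sequence. Let (f_m)_{m≥1}, f and g be measurable real-valued functions on E such that f_m converges pointwise to f, |f_m| ≤ g for every m ≥ 1, and ∫ g dν < ∞. Then almost surely (1/m)·Σ_{j=1}^m f_m(X_j) → ∫ f dν as m → ∞. -/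
open MeasureTheory Filter

/-- If `(X j)` is `ν`-ergodic (the strong law of large numbers holds
almost surely for every `ν`-integrable measurable real function) and `(f m)` is a
sequence of measurable real functions converging pointwise to `flim`, dominated by an
integrable function `g`, then almost surely `(1/m) ∑_{j<m} f m (X j) → ∫ flim dν`. -/
theorem stmt1
    {E : Type*} [MeasurableSpace E] (ν : Measure E) [IsProbabilityMeasure ν]
    {Ω : Type*} [MeasurableSpace Ω] (P : Measure Ω) [IsProbabilityMeasure P]
    (X : ℕ → Ω → E)
    (hX : ∀ φ : E → ℝ, Measurable φ → Integrable φ ν →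
      ∀ᵐ ω ∂P, Tendsto (fun (m : ℕ) => (m : ℝ)⁻¹ * ∑ j ∈ Finset.range m, φ (X j ω))
        atTop (nhds (∫ x, φ x ∂ν)))
    (f : ℕ → E → ℝ) (flim g : E → ℝ)
    (hfmeas : ∀ m, Measurable (f m))
    (hflimmeas : Measurable flim)
    (hgmeas : Measurable g)
    (hlim : ∀ x, Tendsto (fun m => f m x) atTop (nhds (flim x)))
    (hdom : ∀ m x, |f m x| ≤ g x)
    (hgint : Integrable g ν) :
    ∀ᵐ ω ∂P, Tendsto
      (fun (m : ℕ) => (m : ℝ)⁻¹ * ∑ j ∈ Finset.range m, f m (X j ω))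
      atTop (nhds (∫ x, flim x ∂ν)) := by
  -- |flim| ≤ g
  have hflimdom : ∀ x, |flim x| ≤ g x := by
    intro x
    have : Tendsto (fun m => |f m x|) atTop (nhds |flim x|) := (hlim x).abs
    exact le_of_tendsto this (Eventually.of_forall fun m => hdom m x)
  have hgnn : ∀ x, 0 ≤ g x := fun x => (abs_nonneg _).trans (hflimdom x)
  -- define h k x = sup_{n} |f (n+k) x - flim x|
  set h : ℕ → E → ℝ := fun k x => ⨆ n : ℕ, |f (n + k) x - flim x| with hh
  have hbdd : ∀ k x, BddAbove (Set.range fun n : ℕ => |f (n + k) x - flim x|) := by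
    intro k x
    refine ⟨2 * g x, ?_⟩
    rintro y ⟨n, rfl⟩
    calc |f (n + k) x - flim x| ≤ |f (n + k) x| + |flim x| := abs_sub _ _
      _ ≤ g x + g x := add_le_add (hdom _ x) (hflimdom x)
      _ = 2 * g x := by ring
  have hle : ∀ k x, h k x ≤ 2 * g x := by
    intro k x
    refine ciSup_le fun n => ?_
    calc |f (n + k) x - flim x| ≤ |f (n + k) x| + |flim x| := abs_sub _ _
      _ ≤ g x + g x := add_le_add (hdom _ x) (hflimdom x)
      _ = 2 * g x := by ring
  have hnn : ∀ k x, 0 ≤ h k x :=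
    fun k x => (abs_nonneg _).trans (le_ciSup (hbdd k x) 0)
  have hmem : ∀ k x m, k ≤ m → |f m x - flim x| ≤ h k x := by
    intro k x m hkm
    have : m = (m - k) + k := (Nat.sub_add_cancel hkm).symm
    rw [this]
    exact le_ciSup (hbdd k x) (m - k)
  have hhmeas : ∀ k, Measurable (h k) :=
    fun k => Measurable.iSup fun n => ((hfmeas (n + k)).sub hflimmeas).abs
  have hhint : ∀ k, Integrable (h k) ν := by
    intro k
    refine Integrable.mono (hgint.const_mul 2) (hhmeas k).aestronglyMeasurable ?_
    refine Eventually.of_forall fun x => ?_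
    rw [Real.norm_eq_abs, abs_of_nonneg (hnn k x), Real.norm_eq_abs,
      abs_of_nonneg (by linarith [hgnn x])]
    exact hle k x
  -- h k x → 0 pointwise
  have htend : ∀ x, Tendsto (fun k => h k x) atTop (nhds 0) := by
    intro x
    rw [Metric.tendsto_atTop]
    intro ε hε
    obtain ⟨N, hN⟩ := (Metric.tendsto_atTop.1 (hlim x)) (ε / 2) (by linarith)
    refine ⟨N, fun k hk => ?_⟩
    have h1 : h k x ≤ ε / 2 := by
      refine ciSup_le fun n => ?_
      have := hN (n + k) (le_trans hk (Nat.le_add_left _ _))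
      rw [Real.dist_eq] at this
      linarith
    rw [Real.dist_eq, sub_zero, abs_of_nonneg (hnn k x)]
    linarith
  -- ∫ h k → 0
  have hinttend : Tendsto (fun k => ∫ x, h k x ∂ν) atTop (nhds 0) := by
    have := MeasureTheory.tendsto_integral_of_dominated_convergence
      (F := fun k => h k) (f := fun _ => (0 : ℝ)) (bound := fun x => 2 * g x)
      (fun k => (hhmeas k).aestronglyMeasurable) (hgint.const_mul 2)
      (fun k => Eventually.of_forall fun x => by
        rw [Real.norm_eq_abs, abs_of_nonneg (hnn k x)]; exact hle k x)
      (Eventually.of_forall htend)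
    simpa using this
  -- flim integrable
  have hflimint : Integrable flim ν := by
    refine Integrable.mono hgint hflimmeas.aestronglyMeasurable ?_
    exact Eventually.of_forall fun x => by
      rw [Real.norm_eq_abs, Real.norm_eq_abs, abs_of_nonneg (hgnn x)]; exact hflimdom x
  -- a.s. events
  have hAk : ∀ᵐ ω ∂P, ∀ k : ℕ,
      Tendsto (fun (m : ℕ) => (m : ℝ)⁻¹ * ∑ j ∈ Finset.range m, h k (X j ω))
        atTop (nhds (∫ x, h k x ∂ν)) :=
    ae_all_iff.2 fun k => hX (h k) (hhmeas k) (hhint k)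
  have hAf := hX flim hflimmeas hflimint
  filter_upwards [hAk, hAf] with ω hωk hωf
  rw [Metric.tendsto_atTop]
  intro ε hε
  -- choose k with ∫ h k < ε/3
  obtain ⟨k, hk⟩ := (Metric.tendsto_atTop.1 hinttend) (ε / 3) (by linarith)
  have hIk : ∫ x, h k x ∂ν < ε / 3 := by
    have := hk k le_rfl
    rw [Real.dist_eq, sub_zero] at this
    exact (le_abs_self _).trans_lt this
  obtain ⟨N1, hN1⟩ := (Metric.tendsto_atTop.1 hωf) (ε / 3) (by linarith)
  obtain ⟨N2, hN2⟩ := (Metric.tendsto_atTop.1 (hωk k)) (ε / 3 - ∫ x, h k x ∂ν)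
    (by linarith)
  refine ⟨max (max N1 N2) (max k 1), fun m hm => ?_⟩
  have hmN1 : N1 ≤ m := le_trans (le_max_left _ _) (le_trans (le_max_left _ _) hm)
  have hmN2 : N2 ≤ m := le_trans (le_max_right _ _) (le_trans (le_max_left _ _) hm)
  have hmk : k ≤ m := le_trans (le_max_left _ _) (le_trans (le_max_right _ _) hm)
  have hm1 : 1 ≤ m := le_trans (le_max_right _ _) (le_trans (le_max_right _ _) hm)
  have hmpos : (0 : ℝ) < (m : ℝ) := by exact_mod_cast hm1
  have hinv : (0 : ℝ) ≤ (m : ℝ)⁻¹ := by positivity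
  -- |S - T| ≤ U
  have key : |(m : ℝ)⁻¹ * ∑ j ∈ Finset.range m, f m (X j ω)
      - (m : ℝ)⁻¹ * ∑ j ∈ Finset.range m, flim (X j ω)|
      ≤ (m : ℝ)⁻¹ * ∑ j ∈ Finset.range m, h k (X j ω) := by
    rw [← mul_sub, ← Finset.sum_sub_distrib, abs_mul, abs_of_nonneg hinv]
    refine mul_le_mul_of_nonneg_left ?_ hinv
    refine (Finset.abs_sum_le_sum_abs _ _).trans (Finset.sum_le_sum fun j _ => ?_)
    exact hmem k (X j ω) m hmk
  have hU : (m : ℝ)⁻¹ * ∑ j ∈ Finset.range m, h k (X j ω) < 2 * ε / 3 := by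
    have := hN2 m hmN2
    rw [Real.dist_eq] at this
    have h2 := (abs_lt.1 this).2
    linarith
  have hT := hN1 m hmN1
  rw [Real.dist_eq] at hT ⊢
  calc |(m : ℝ)⁻¹ * ∑ j ∈ Finset.range m, f m (X j ω) - ∫ x, flim x ∂ν|
      ≤ |(m : ℝ)⁻¹ * ∑ j ∈ Finset.range m, f m (X j ω)
          - (m : ℝ)⁻¹ * ∑ j ∈ Finset.range m, flim (X j ω)|
        + |(m : ℝ)⁻¹ * ∑ j ∈ Finset.range m, flim (X j ω) - ∫ x, flim x ∂ν| :=
        abs_sub_le _ _ _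
    _ < 2 * ε / 3 + ε / 3 := add_lt_add_of_le_of_lt (key.trans hU.le) hT
    _ = ε := by ring
end

section
/- Let (X_j)_{j≥1} be a ν-ergodic sequence (in the extended sense, so that the strong law of large numbers holds almost surely for every nonnegative measurable function, with limits taken in [0,∞]). Let (f_m)_{m≥1}, f and g be measurable real-valued functions on E such that f_m converges pointwise to f, g is nonnegative with ∫ g dν < ∞, f_m ≤ g for every m ≥ 1, and ∫ f₋ dν = +∞ where f₋ denotes the negative part of f. Then almost surely (1/m)·Σ_{j=1}^m f_m(X_j) → −∞ as m → ∞. -/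
/-!
Put `h_N = min(N, inf_{m ≥ N} (g - f_m))`. These are bounded, nonnegative and increase to
`g - flim ≥ flim⁻`, so by monotone convergence `∫ h_N dν → ∞`. For `m ≥ N` we have
`f_m ≤ g - h_N`, and the ergodic averages of `g` and of `h_N` converge to their integrals, so
`limsup_m (1/m) ∑_{j<m} f_m(X_j) ≤ ∫ g dν - ∫ h_N dν` for every `N`.
-/

open MeasureTheory Filter Finset
open scoped ENNReal Topology

theorem monotone_iInf_add {α : Type*} [CompleteLattice α] (u : ℕ → α) :
    Monotone fun N => ⨅ j, u (N + j) :=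
  fun N M hNM => le_iInf fun j => iInf_le_of_le (M - N + j) <| by
    rw [← Nat.add_assoc, Nat.add_sub_cancel' hNM]

section

variable {E Ω : Type*} [MeasurableSpace Ω]

def IsExtendedErgodic [MeasurableSpace E] (ν : Measure E) (P : Measure Ω) (X : ℕ → Ω → E) :
    Prop :=
  ∀ φ : E → ℝ≥0∞, Measurable φ →
    ∀ᵐ ω ∂P, Tendsto (fun m => (∑ j ∈ range m, φ (X j ω)) / (m : ℝ≥0∞)) atTop (𝓝 (∫⁻ x, φ x ∂ν))

theorem IsExtendedErgodic.ae_tendsto_average [MeasurableSpace E] {ν : Measure E}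
    {P : Measure Ω} {X : ℕ → Ω → E} (hX : IsExtendedErgodic ν P X) {φ : E → ℝ}
    (hφ : Measurable φ) (hφ0 : 0 ≤ φ) (hφi : Integrable φ ν) :
    ∀ᵐ ω ∂P, Tendsto (fun m : ℕ => (m : ℝ)⁻¹ * ∑ j ∈ range m, φ (X j ω)) atTop
      (𝓝 (∫ x, φ x ∂ν)) := by
  filter_upwards [hX _ hφ.ennreal_ofReal] with ω hω
  rw [integral_eq_lintegral_of_nonneg_ae (ae_of_all _ hφ0) hφ.aestronglyMeasurable]
  refine ((ENNReal.tendsto_toReal hφi.lintegral_lt_top.ne).comp hω).congr fun m => ?_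
  rw [Function.comp_apply, ENNReal.toReal_div, ENNReal.toReal_sum fun _ _ => ENNReal.ofReal_ne_top]
  simp only [ENNReal.toReal_ofReal (hφ0 _), ENNReal.toReal_natCast, div_eq_inv_mul]

variable (f : ℕ → E → ℝ) (g : E → ℝ)

/-- The truncation at `N` keeps `tailGap f g N` bounded, hence integrable, without spoiling
monotone convergence in `N`. -/
noncomputable def tailGap (N : ℕ) (x : E) : ℝ≥0∞ :=
  min (⨅ j, ENNReal.ofReal (g x - f (N + j) x)) N

variable {f g}

theorem tailGap_le_natCast (N : ℕ) (x : E) : tailGap f g N x ≤ N :=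
  min_le_right _ _

theorem tailGap_le_ofReal_sub {N m : ℕ} (hNm : N ≤ m) (x : E) :
    tailGap f g N x ≤ ENNReal.ofReal (g x - f m x) := by
  refine (min_le_left _ _).trans (iInf_le_of_le (m - N) ?_)
  rw [Nat.add_sub_cancel' hNm]

theorem le_sub_toReal_tailGap {N m : ℕ} (hNm : N ≤ m) {x : E} (hfg : f m x ≤ g x) :
    f m x ≤ g x - (tailGap f g N x).toReal := by
  have h := ENNReal.toReal_mono ENNReal.ofReal_ne_top
    (tailGap_le_ofReal_sub (f := f) (g := g) hNm x)
  rw [ENNReal.toReal_ofReal (sub_nonneg.2 hfg)] at h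
  linarith

theorem monotone_tailGap : Monotone (tailGap f g) := fun _ _ hNM x =>
  min_le_min (monotone_iInf_add (fun m => ENNReal.ofReal (g x - f m x)) hNM)
    (by exact_mod_cast hNM)

theorem iSup_tailGap_eq {flim : E → ℝ} {x : E}
    (hlim : Tendsto (fun m => f m x) atTop (𝓝 (flim x))) :
    ⨆ N, tailGap f g N x = ENNReal.ofReal (g x - flim x) := by
  set u := fun m => ENNReal.ofReal (g x - f m x)
  calc ⨆ N, tailGap f g N x = ⨆ N : ℕ, (⨅ j, u (N + j)) ⊓ (N : ℝ≥0∞) := rfl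
    _ = (⨆ N, ⨅ j, u (N + j)) ⊓ ⨆ N : ℕ, (N : ℝ≥0∞) :=
      iSup_inf_of_monotone (monotone_iInf_add u) fun _ _ h => by exact_mod_cast h
    _ = liminf u atTop := by
      rw [ENNReal.iSup_natCast, inf_top_eq, liminf_eq_iSup_iInf_of_nat']
      simp only [Nat.add_comm]
    _ = ENNReal.ofReal (g x - flim x) :=
      ((ENNReal.continuous_ofReal.tendsto _).comp (tendsto_const_nhds.sub hlim)).liminf_eq

variable [MeasurableSpace E]

theorem measurable_tailGap (hf : ∀ m, Measurable (f m)) (hg : Measurable g) (N : ℕ) :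
    Measurable (tailGap f g N) :=
  (Measurable.iInf fun j => (hg.sub (hf (N + j))).ennreal_ofReal).min measurable_const

theorem integrable_toReal_tailGap {ν : Measure E} [IsFiniteMeasure ν]
    (hf : ∀ m, Measurable (f m)) (hg : Measurable g) (N : ℕ) :
    Integrable (fun x => (tailGap f g N x).toReal) ν := by
  refine .of_bound (measurable_tailGap hf hg N).ennreal_toReal.aestronglyMeasurable N
    (ae_of_all _ fun x => ?_)
  rw [Real.norm_of_nonneg ENNReal.toReal_nonneg]
  simpa using ENNReal.toReal_mono (ENNReal.natCast_ne_top N) (tailGap_le_natCast N x)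

theorem exists_lt_integral_tailGap {ν : Measure E} [IsFiniteMeasure ν] {flim : E → ℝ}
    (hf : ∀ m, Measurable (f m)) (hg : Measurable g)
    (hlim : ∀ x, Tendsto (fun m => f m x) atTop (𝓝 (flim x))) (hg0 : ∀ x, 0 ≤ g x)
    (hneg : ∫⁻ x, ENNReal.ofReal (-flim x) ∂ν = ⊤) (c : ℝ) :
    ∃ N, c < ∫ x, (tailGap f g N x).toReal ∂ν := by
  have htop : ⨆ N, ∫⁻ x, tailGap f g N x ∂ν = ⊤ := by
    rw [← lintegral_iSup (measurable_tailGap hf hg) monotone_tailGap, eq_top_iff, ← hneg]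
    refine lintegral_mono fun x => ?_
    rw [iSup_tailGap_eq (hlim x)]
    exact ENNReal.ofReal_le_ofReal (by linarith [hg0 x])
  obtain ⟨N, hN⟩ := lt_iSup_iff.1 (htop ▸ ENNReal.ofReal_lt_top : ENNReal.ofReal c < _)
  refine ⟨N, ?_⟩
  have hfin : ∫⁻ x, tailGap f g N x ∂ν ≠ ⊤ := by
    refine ((lintegral_mono (tailGap_le_natCast N)).trans_lt ?_).ne
    rw [lintegral_const]
    exact ENNReal.mul_lt_top (ENNReal.natCast_lt_top N) (measure_lt_top ν _)
  rw [integral_toReal (measurable_tailGap hf hg N).aemeasurable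
    (ae_of_all _ fun x => (tailGap_le_natCast N x).trans_lt (ENNReal.natCast_lt_top N))]
  exact (le_max_left c 0).trans_lt (ENNReal.toReal_ofReal' ▸ ENNReal.toReal_strict_mono hfin hN)

end

theorem stmt2_general
    {E : Type*} [MeasurableSpace E] (ν : Measure E) [IsProbabilityMeasure ν]
    {Ω : Type*} [MeasurableSpace Ω] (P : Measure Ω)
    (X : ℕ → Ω → E)
    (hX : ∀ φ : E → ENNReal, Measurable φ →
      ∀ᵐ ω ∂P, Tendsto (fun m => (∑ j ∈ Finset.range m, φ (X j ω)) / (m : ENNReal))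
        atTop (nhds (∫⁻ x, φ x ∂ν)))
    (f : ℕ → E → ℝ) (flim g : E → ℝ)
    (hfmeas : ∀ m, Measurable (f m))
    (hgmeas : Measurable g)
    (hlim : ∀ x, Tendsto (fun m => f m x) atTop (nhds (flim x)))
    (hgnn : ∀ x, 0 ≤ g x)
    (hgint : Integrable g ν)
    (hdom : ∀ m x, f m x ≤ g x)
    (hneg : ∫⁻ x, ENNReal.ofReal (-(flim x)) ∂ν = ⊤) :
    ∀ᵐ ω ∂P, Tendsto
      (fun (m : ℕ) => (m : ℝ)⁻¹ * ∑ j ∈ Finset.range m, f m (X j ω))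
      atTop atBot := by
  have hX : IsExtendedErgodic ν P X := hX
  set ψ := fun N x => (tailGap f g N x).toReal
  have hψ : ∀ᵐ ω ∂P, ∀ N, Tendsto (fun m : ℕ => (m : ℝ)⁻¹ * ∑ j ∈ range m, ψ N (X j ω))
      atTop (𝓝 (∫ x, ψ N x ∂ν)) :=
    ae_all_iff.2 fun N => hX.ae_tendsto_average (measurable_tailGap hfmeas hgmeas N).ennreal_toReal
      (fun _ => ENNReal.toReal_nonneg) (integrable_toReal_tailGap hfmeas hgmeas N)
  filter_upwards [hX.ae_tendsto_average hgmeas hgnn hgint, hψ] with ω hgω hψω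
  refine tendsto_atBot.2 fun b => ?_
  obtain ⟨N, hN⟩ := exists_lt_integral_tailGap hfmeas hgmeas hlim hgnn hneg (∫ x, g x ∂ν - b)
  change _ < ∫ x, ψ N x ∂ν at hN
  filter_upwards [(hgω.sub (hψω N)).eventually_lt_const (show _ < b by linarith),
    eventually_ge_atTop N] with m hm hNm
  calc (m : ℝ)⁻¹ * ∑ j ∈ range m, f m (X j ω)
      ≤ (m : ℝ)⁻¹ * ∑ j ∈ range m, (g (X j ω) - ψ N (X j ω)) := by
        gcongr with j
        exact le_sub_toReal_tailGap hNm (hdom m _)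
    _ = (m : ℝ)⁻¹ * ∑ j ∈ range m, g (X j ω) - (m : ℝ)⁻¹ * ∑ j ∈ range m, ψ N (X j ω) := by
        rw [sum_sub_distrib, mul_sub]
    _ ≤ b := hm.le

/-- If `(X j)` is `ν`-ergodic in the extended sense, `(f m)` are
measurable real functions converging pointwise to `flim`, `g` is nonnegative and
integrable, `f m ≤ g` for all `m`, and the negative part of `flim` has infinite
integral, then almost surely `(1/m) ∑_{j<m} f m (X j) → -∞`. -/
theorem stmt2
    {E : Type*} [MeasurableSpace E] (ν : Measure E) [IsProbabilityMeasure ν]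
    {Ω : Type*} [MeasurableSpace Ω] (P : Measure Ω) [IsProbabilityMeasure P]
    (X : ℕ → Ω → E)
    (hX : ∀ φ : E → ENNReal, Measurable φ →
      ∀ᵐ ω ∂P, Tendsto (fun m => (∑ j ∈ Finset.range m, φ (X j ω)) / (m : ENNReal))
        atTop (nhds (∫⁻ x, φ x ∂ν)))
    (f : ℕ → E → ℝ) (flim g : E → ℝ)
    (hfmeas : ∀ m, Measurable (f m))
    (hflimmeas : Measurable flim)
    (hgmeas : Measurable g)
    (hlim : ∀ x, Tendsto (fun m => f m x) atTop (nhds (flim x)))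
    (hgnn : ∀ x, 0 ≤ g x)
    (hgint : Integrable g ν)
    (hdom : ∀ m x, f m x ≤ g x)
    (hneg : ∫⁻ x, ENNReal.ofReal (-(flim x)) ∂ν = ⊤) :
    ∀ᵐ ω ∂P, Tendsto
      (fun (m : ℕ) => (m : ℝ)⁻¹ * ∑ j ∈ Finset.range m, f m (X j ω))
      atTop atBot :=
  stmt2_general ν P X hX f flim g hfmeas hgmeas hlim hgnn hgint hdom hneg
end

section
/- Let (Ω, 𝔉, P) be a probability space and, for each n ≥ 1, let ℓ_n : ℝ^d × Ω → ℝ be measurable in ω. Let θ* ∈ ℝ^d and ε > 0 be such that, for every n ≥ 1 and P-almost every ω, the map θ ↦ ℓ_n(θ, ω) is twice continuously differentiable on the open ball B(θ*, ε). Let (θ̂_n)_{n≥1} be a sequence of ℝ^d-valued random vectors converging in probability to θ*. Assume: (a) √n · ∇_θ ℓ_n(θ̂_n) → 0 in probability; (b) sup_{θ ∈ B(θ*, ε)} ‖∇²_θ ℓ_n(θ) − H(θ)‖ → 0 in probability, for some (deterministic) matrix-valued function H : B(θ*, ε) → ℝ^{d×d} which is continuous at θ* and such that H(θ*) is invertible;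 (c) the sequence of random vectors √n · ∇_θ ℓ_n(θ*) is bounded in probability (tight). Then √n·(θ̂_n − θ*) + H(θ*)⁻¹ · √n · ∇_θ ℓ_n(θ*) → 0 in probability as n → ∞. -/
/-!
On the event where `θhat n` is near `θs`, the Hessian is uniformly close to `H` and `H` is close
to `H θs`, the mean value inequality gives
`√n ∇ℓ_n(θ̂_n) - √n ∇ℓ_n(θs) = H(θs) (√n (θ̂_n - θs)) + o(1) · √n ‖θ̂_n - θs‖`.
Inverting `H θs` first bounds `√n ‖θ̂_n - θs‖` by the two scaled gradients, which are small
resp. tight, and then shows that the linearisation remainder is small. The bad events have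
small probability by consistency and (a)–(c).
-/

open MeasureTheory Filter Topology InnerProductSpace Metric

theorem ContDiffAt.differentiableAt_gradient {F : Type*} [NormedAddCommGroup F]
    [InnerProductSpace ℝ F] [CompleteSpace F] {f : F → ℝ} {x : F} (hf : ContDiffAt ℝ 2 f x) :
    DifferentiableAt ℝ (gradient f) x :=
  (toDual ℝ F).symm.differentiable.differentiableAt.comp x
    ((hf.fderiv_right le_rfl).differentiableAt one_ne_zero)

section LinearAlgebra

variable {𝕜 E : Type*} [NontriviallyNormedField 𝕜] [NormedAddCommGroup E] [NormedSpace 𝕜 E]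
  {A : E →L[𝕜] E} {u a b : E} {τ : ℝ}

theorem ContinuousLinearMap.ringInverse_apply_apply (hA : IsUnit A) (w : E) :
    Ring.inverse A (A w) = w := by
  rw [← mul_apply_eq_comp, Ring.inverse_mul_cancel _ hA, one_apply_eq_self]

theorem norm_le_of_norm_sub_sub_apply_le (hA : IsUnit A) (hu : ‖a - b - A u‖ ≤ τ * ‖u‖)
    (hτ : 2 * τ * ‖Ring.inverse A‖ ≤ 1) :
    ‖u‖ ≤ 2 * ‖Ring.inverse A‖ * (‖a‖ + ‖b‖) := by
  have hAu : ‖A u‖ ≤ ‖a‖ + ‖b‖ + τ * ‖u‖ := by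
    calc ‖A u‖ = ‖a - b - (a - b - A u)‖ := by rw [sub_sub_cancel]
      _ ≤ ‖a‖ + ‖b‖ + ‖a - b - A u‖ := (norm_sub_le _ _).trans (by gcongr; exact norm_sub_le _ _)
      _ ≤ ‖a‖ + ‖b‖ + τ * ‖u‖ := by gcongr
  have hu_le : ‖u‖ ≤ ‖Ring.inverse A‖ * (‖a‖ + ‖b‖ + τ * ‖u‖) := by
    calc ‖u‖ = ‖Ring.inverse A (A u)‖ := by rw [A.ringInverse_apply_apply hA]
      _ ≤ ‖Ring.inverse A‖ * ‖A u‖ := (Ring.inverse A).le_opNorm _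
      _ ≤ _ := by gcongr
  nlinarith [mul_le_mul_of_nonneg_right hτ (norm_nonneg u)]

theorem norm_add_inverse_apply_le (hA : IsUnit A) (hu : ‖a - b - A u‖ ≤ τ * ‖u‖) :
    ‖u + Ring.inverse A b‖ ≤ ‖Ring.inverse A‖ * (‖a‖ + τ * ‖u‖) := by
  calc ‖u + Ring.inverse A b‖ = ‖Ring.inverse A (a - (a - b - A u))‖ := by
        rw [show a - (a - b - A u) = A u + b by abel, map_add, A.ringInverse_apply_apply hA]
    _ ≤ ‖Ring.inverse A‖ * ‖a - (a - b - A u)‖ := (Ring.inverse A).le_opNorm _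
    _ ≤ ‖Ring.inverse A‖ * (‖a‖ + τ * ‖u‖) := by gcongr; exact (norm_sub_le _ _).trans (by gcongr)

end LinearAlgebra

section Gradient

variable {F : Type*} [NormedAddCommGroup F] [InnerProductSpace ℝ F] [CompleteSpace F]
  {f : F → ℝ} {x₀ x : F} {A : F →L[ℝ] F} {r τ s : ℝ}

theorem norm_smul_sub_add_inverse_gradient_le (hA : IsUnit A)
    (hf : ContDiffOn ℝ 2 f (ball x₀ r)) (hx : x ∈ ball x₀ r)
    (hHess : ∀ y ∈ ball x₀ r, ‖fderiv ℝ (gradient f) y - A‖ ≤ τ) (hτ0 : 0 ≤ τ)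
    (hτ : 2 * τ * ‖Ring.inverse A‖ ≤ 1) (hs : 0 ≤ s) :
    ‖s • (x - x₀) + Ring.inverse A (s • gradient f x₀)‖ ≤
      ‖Ring.inverse A‖ * (s * ‖gradient f x‖ +
        2 * τ * ‖Ring.inverse A‖ * (s * ‖gradient f x‖ + s * ‖gradient f x₀‖)) := by
  have hmvt : ‖gradient f x - gradient f x₀ - A (x - x₀)‖ ≤ τ * ‖x - x₀‖ :=
    (convex_ball x₀ r).norm_image_sub_le_of_norm_fderiv_le'
      (fun y hy => (hf.contDiffAt (isOpen_ball.mem_nhds hy)).differentiableAt_gradient) hHess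
      (mem_ball_self (pos_of_mem_ball hx)) hx
  have hscaled : ‖s • gradient f x - s • gradient f x₀ - A (s • (x - x₀))‖
      ≤ τ * ‖s • (x - x₀)‖ := by
    rw [map_smul, ← smul_sub, ← smul_sub, norm_smul, norm_smul, Real.norm_of_nonneg hs,
      mul_left_comm]
    exact mul_le_mul_of_nonneg_left hmvt hs
  have hscaled_le := norm_le_of_norm_sub_sub_apply_le hA hscaled hτ
  calc _ ≤ ‖Ring.inverse A‖ * (‖s • gradient f x‖ + τ * ‖s • (x - x₀)‖) :=
        norm_add_inverse_apply_le hA hscaled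
    _ ≤ ‖Ring.inverse A‖ * (‖s • gradient f x‖ +
          τ * (2 * ‖Ring.inverse A‖ * (‖s • gradient f x‖ + ‖s • gradient f x₀‖))) := by
        gcongr
    _ = _ := by simp only [norm_smul, Real.norm_of_nonneg hs]; ring

end Gradient

theorem tendsto_measure_union_zero {Ω : Type*} [MeasurableSpace Ω] {μ : Measure Ω}
    {A B : ℕ → Set Ω} (hA : Tendsto (fun n => μ (A n)) atTop (𝓝 0))
    (hB : Tendsto (fun n => μ (B n)) atTop (𝓝 0)) :
    Tendsto (fun n => μ (A n ∪ B n)) atTop (𝓝 0) :=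
  tendsto_of_tendsto_of_tendsto_of_le_of_le tendsto_const_nhds (by simpa using hA.add hB)
    (fun _ => zero_le) fun _ => measure_union_le _ _

theorem tendsto_measure_zero_of_ae_subset_union {Ω : Type*} [MeasurableSpace Ω] {μ : Measure Ω}
    {A : ℕ → Set Ω}
    (h : ∀ η > (0 : ℝ), ∃ B C : ℕ → Set Ω, Tendsto (fun n => μ (B n)) atTop (𝓝 0) ∧
      (∀ n, μ (C n) ≤ ENNReal.ofReal η) ∧ ∀ n, ∀ᵐ ω ∂μ, ω ∈ A n → ω ∈ B n ∪ C n) :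
    Tendsto (fun n => μ (A n)) atTop (𝓝 0) := by
  refine ENNReal.tendsto_nhds_zero.2 fun e he => ?_
  obtain ⟨η, -, hη, hηe⟩ := ENNReal.lt_iff_exists_real_btwn.1 (ENNReal.half_pos he.ne')
  obtain ⟨B, C, hB, hC, hA⟩ := h η (ENNReal.ofReal_pos.1 hη)
  filter_upwards [ENNReal.tendsto_nhds_zero.1 hB (e / 2) (ENNReal.half_pos he.ne')] with n hn
  calc μ (A n) ≤ μ (B n ∪ C n) := measure_mono_ae (hA n)
    _ ≤ μ (B n) + μ (C n) := measure_union_le _ _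
    _ ≤ e / 2 + e / 2 := add_le_add hn ((hC n).trans hηe.le)
    _ = e := ENNReal.add_halves e

/-- `σ` bounds the scaled gradient at `θhat n`, and `2 * σ` the Hessian error near `θs`. -/
theorem exists_pos_tolerance (K C δ : ℝ) (hδ : 0 < δ) :
    ∃ σ > 0, 2 * (2 * σ) * K ≤ 1 ∧ K * (σ + 2 * (2 * σ) * K * (σ + C)) ≤ δ := by
  have h1 : ∀ᶠ σ in 𝓝 (0 : ℝ), 2 * (2 * σ) * K < 1 :=
    ContinuousAt.eventually_lt (by fun_prop) (by fun_prop) (by simp)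
  have h2 : ∀ᶠ σ in 𝓝 (0 : ℝ), K * (σ + 2 * (2 * σ) * K * (σ + C)) < δ :=
    ContinuousAt.eventually_lt (by fun_prop) (by fun_prop) (by simpa using hδ)
  obtain ⟨σ, ⟨h1σ, h2σ⟩, hσ⟩ :=
    (((h1.and h2).filter_mono nhdsWithin_le_nhds).and
      (self_mem_nhdsWithin (s := Set.Ioi 0))).exists
  exact ⟨σ, hσ, h1σ.le, h2σ.le⟩

theorem stmt5_general
    {Ω : Type*} [MeasurableSpace Ω] (P : Measure Ω)
    {d : ℕ}
    (L : ℕ → EuclideanSpace ℝ (Fin d) → Ω → ℝ)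
    (θs : EuclideanSpace ℝ (Fin d)) (ε : ℝ) (hε : 0 < ε)
    (hC2 : ∀ n, ∀ᵐ ω ∂P, ContDiffOn ℝ 2 (fun θ => L n θ ω) (Metric.ball θs ε))
    (θhat : ℕ → Ω → EuclideanSpace ℝ (Fin d))
    (hcons : ∀ δ > (0 : ℝ), Tendsto (fun n => P {ω | δ < ‖θhat n ω - θs‖})
      atTop (nhds 0))
    (ha : ∀ δ > (0 : ℝ), Tendsto (fun (n : ℕ) => P {ω | δ <
        Real.sqrt n * ‖gradient (fun θ => L n θ ω) (θhat n ω)‖}) atTop (nhds 0))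
    (H : EuclideanSpace ℝ (Fin d) →
      (EuclideanSpace ℝ (Fin d) →L[ℝ] EuclideanSpace ℝ (Fin d)))
    (hHcont : ContinuousAt H θs)
    (hHinv : IsUnit (H θs))
    (hb : ∀ δ > (0 : ℝ), Tendsto (fun (n : ℕ) => P {ω | ∃ θ ∈ Metric.ball θs ε,
        δ < ‖fderiv ℝ (fun θ' => gradient (fun θ'' => L n θ'' ω) θ') θ - H θ‖})
      atTop (nhds 0))
    (hc : ∀ η > (0 : ℝ), ∃ C > (0 : ℝ), ∀ n : ℕ,
      P {ω | C < Real.sqrt n * ‖gradient (fun θ => L n θ ω) θs‖} ≤ ENNReal.ofReal η) :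
    ∀ δ > (0 : ℝ), Tendsto (fun (n : ℕ) => P {ω | δ <
        ‖Real.sqrt n • (θhat n ω - θs) +
          (Ring.inverse (H θs)) (Real.sqrt n • gradient (fun θ => L n θ ω) θs)‖})
      atTop (nhds 0) := by
  intro δ hδ
  refine tendsto_measure_zero_of_ae_subset_union fun η hη => ?_
  obtain ⟨C, -, hC⟩ := hc η hη
  obtain ⟨σ, hσ, hσK, hσδ⟩ := exists_pos_tolerance ‖Ring.inverse (H θs)‖ C δ hδ
  obtain ⟨r, hr, hball⟩ := eventually_nhds_iff_ball.1
    (Filter.Eventually.and (ball_mem_nhds θs hε) (hHcont.eventually (ball_mem_nhds (H θs) hσ)))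
  refine ⟨fun n => {ω | r / 2 < ‖θhat n ω - θs‖} ∪
      {ω | σ < Real.sqrt n * ‖gradient (fun θ => L n θ ω) (θhat n ω)‖} ∪
      {ω | ∃ θ ∈ ball θs ε, σ < ‖fderiv ℝ (gradient (fun θ' => L n θ' ω)) θ - H θ‖},
    fun n => {ω | C < Real.sqrt n * ‖gradient (fun θ => L n θ ω) θs‖},
    tendsto_measure_union_zero (tendsto_measure_union_zero (hcons _ (by positivity)) (ha σ hσ))
      (hb σ hσ), hC, fun n => ?_⟩
  filter_upwards [hC2 n] with ω hω hδω
  by_contra hmem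
  simp only [Set.mem_union, Set.mem_ofPred_eq, not_or, not_lt, not_exists, not_and] at hmem hδω
  obtain ⟨⟨⟨hθhat, hgrad⟩, hHess⟩, hgrad₀⟩ := hmem
  have hHess' : ∀ θ ∈ ball θs r,
      ‖fderiv ℝ (gradient (fun θ' => L n θ' ω)) θ - H θs‖ ≤ 2 * σ := fun θ hθ =>
    calc _ ≤ _ := norm_sub_le_norm_sub_add_norm_sub _ (H θ) _
      _ ≤ σ + σ :=
        add_le_add (hHess θ (hball θ hθ).1) (dist_eq_norm (H θ) (H θs) ▸ (hball θ hθ).2).le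
      _ = 2 * σ := by ring
  refine hδω.not_ge ((norm_smul_sub_add_inverse_gradient_le hHinv
    (hω.mono fun θ hθ => (hball θ hθ).1) (mem_ball_iff_norm.2 (by linarith)) hHess'
    (by positivity) hσK (Real.sqrt_nonneg n)).trans (hσδ.trans' ?_))
  gcongr

/-- An asymptotic linearisation lemma for Z-estimators.
`L n θ ω` is the objective `ℓ_n(θ, ω)`, twice continuously differentiable in `θ` on the
ball `B(θs, ε)` for a.e. `ω`; `θhat n` converges in probability to `θs`;
(a) `√n ∇ℓ_n(θ̂_n) → 0` in probability; (b) the Hessian of `ℓ_n` converges to a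
deterministic continuous function `H`, uniformly on `B(θs, ε)`, in probability, with
`H θs` invertible; (c) `√n ∇ℓ_n(θs)` is bounded in probability.
Then `√n (θ̂_n - θs) + H(θs)⁻¹ (√n ∇ℓ_n(θs)) → 0` in probability.
(Gradients are `gradient`, Hessians are `fderiv` of the gradient, viewed as continuous
linear endomorphisms of `ℝ^d`; the event "the sup over the ball exceeds `δ`" is encoded
as "`∃ θ` in the ball where the norm exceeds `δ`".) -/
theorem stmt5
    {Ω : Type*} [MeasurableSpace Ω] (P : Measure Ω) [IsProbabilityMeasure P]
    {d : ℕ}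
    (L : ℕ → EuclideanSpace ℝ (Fin d) → Ω → ℝ)
    (hLmeas : ∀ n θ, Measurable (fun ω => L n θ ω))
    (θs : EuclideanSpace ℝ (Fin d)) (ε : ℝ) (hε : 0 < ε)
    (hC2 : ∀ n, ∀ᵐ ω ∂P, ContDiffOn ℝ 2 (fun θ => L n θ ω) (Metric.ball θs ε))
    (θhat : ℕ → Ω → EuclideanSpace ℝ (Fin d))
    (hcons : ∀ δ > (0 : ℝ), Tendsto (fun n => P {ω | δ < ‖θhat n ω - θs‖})
      atTop (nhds 0))
    (ha : ∀ δ > (0 : ℝ), Tendsto (fun (n : ℕ) => P {ω | δ <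
        Real.sqrt n * ‖gradient (fun θ => L n θ ω) (θhat n ω)‖}) atTop (nhds 0))
    (H : EuclideanSpace ℝ (Fin d) →
      (EuclideanSpace ℝ (Fin d) →L[ℝ] EuclideanSpace ℝ (Fin d)))
    (hHcont : ContinuousAt H θs)
    (hHinv : IsUnit (H θs))
    (hb : ∀ δ > (0 : ℝ), Tendsto (fun (n : ℕ) => P {ω | ∃ θ ∈ Metric.ball θs ε,
        δ < ‖fderiv ℝ (fun θ' => gradient (fun θ'' => L n θ'' ω) θ') θ - H θ‖})
      atTop (nhds 0))
    (hc : ∀ η > (0 : ℝ), ∃ C > (0 : ℝ), ∀ n : ℕ,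
      P {ω | C < Real.sqrt n * ‖gradient (fun θ => L n θ ω) θs‖} ≤ ENNReal.ofReal η) :
    ∀ δ > (0 : ℝ), Tendsto (fun (n : ℕ) => P {ω | δ <
        ‖Real.sqrt n • (θhat n ω - θs) +
          (Ring.inverse (H θs)) (Real.sqrt n • gradient (fun θ => L n θ ω) θs)‖})
      atTop (nhds 0) :=
  stmt5_general P L θs ε hε hC2 θhat hcons ha H hHcont hHinv hb hc
end

section
/- Let (X_i)_{i≥1} be independent and identically distributed E-valued random variables with common law ν. Let (f_n)_{n≥1}, f and g be measurable real-valued functions on E such that f_n converges pointwise to f, |f_n| ≤ g for every n ≥ 1, and ∫ g² dν < ∞. Then √n · ( (1/n)·Σ_{i=1}^n { f_n(X_i) − f(X_i) } − ∫ (f_n − f) dν ) → 0 in probability as n → ∞. -/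
open MeasureTheory Filter ProbabilityTheory Finset

/-!
With `h n = f n - flim`, the centred sum `∑_{i<n} h n (X i)` has variance `n · Var_ν (h n)` by
pairwise independence, so Chebyshev bounds the deviation probability by
`Var_ν (h n) / δ² ≤ ∫ (h n)² dν / δ²`. Since `|h n| ≤ 2g` with `g² ∈ L¹` and `h n → 0` pointwise,
dominated convergence sends `∫ (h n)² dν` to `0`.
-/

lemma sq_sub_le_four_mul_sq_of_abs_le {a b c : ℝ} (ha : |a| ≤ c) (hb : |b| ≤ c) :
    (a - b) ^ 2 ≤ 4 * c ^ 2 := by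
  have hab : |a - b| ≤ 2 * c := by linarith [abs_sub a b]
  nlinarith [sq_abs (a - b), abs_nonneg (a - b)]

lemma abs_le_of_tendsto_of_abs_le {E : Type*} {f : ℕ → E → ℝ} {flim g : E → ℝ}
    (hlim : ∀ x, Tendsto (fun n => f n x) atTop (nhds (flim x)))
    (hdom : ∀ n x, |f n x| ≤ g x) (x : E) : |flim x| ≤ g x :=
  le_of_tendsto (hlim x).abs (Eventually.of_forall fun n => hdom n x)

section Dominated

variable {E : Type*} [MeasurableSpace E] {ν : Measure E}

lemma integrable_sq_sub_of_abs_le {u v g : E → ℝ} (hu : AEStronglyMeasurable u ν)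
    (hv : AEStronglyMeasurable v ν) (hug : ∀ x, |u x| ≤ g x) (hvg : ∀ x, |v x| ≤ g x)
    (hg2 : Integrable (fun x => g x ^ 2) ν) :
    Integrable (fun x => (u x - v x) ^ 2) ν :=
  (hg2.const_mul 4).mono ((hu.sub hv).pow 2) <| ae_of_all _ fun x => by
    rw [Real.norm_of_nonneg (sq_nonneg _), Real.norm_of_nonneg (by positivity)]
    exact sq_sub_le_four_mul_sq_of_abs_le (hug x) (hvg x)

lemma tendsto_integral_sq_sub_of_dominated {f : ℕ → E → ℝ} {flim g : E → ℝ}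
    (hf : ∀ n, AEStronglyMeasurable (f n) ν) (hflim : AEStronglyMeasurable flim ν)
    (hlim : ∀ x, Tendsto (fun n => f n x) atTop (nhds (flim x)))
    (hdom : ∀ n x, |f n x| ≤ g x) (hg2 : Integrable (fun x => g x ^ 2) ν) :
    Tendsto (fun n => ∫ x, (f n x - flim x) ^ 2 ∂ν) atTop (nhds 0) := by
  have hsq_lim : ∀ x, Tendsto (fun n => (f n x - flim x) ^ 2) atTop (nhds 0) := fun x => by
    simpa using ((hlim x).sub_const (flim x)).pow 2
  simpa using tendsto_integral_of_dominated_convergence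
    (F := fun n x => (f n x - flim x) ^ 2) (fun x => 4 * g x ^ 2)
    (fun n => ((hf n).sub hflim).pow 2) (hg2.const_mul 4)
    (fun n => ae_of_all _ fun x => by
      rw [Real.norm_of_nonneg (sq_nonneg _)]
      exact sq_sub_le_four_mul_sq_of_abs_le (hdom n x) (abs_le_of_tendsto_of_abs_le hlim hdom x))
    (ae_of_all _ hsq_lim)

end Dominated

section Chebyshev

variable {E Ω : Type*} [MeasurableSpace E] [MeasurableSpace Ω] {ν : Measure E} {P : Measure Ω}
  {X : ℕ → Ω → E} {h : E → ℝ}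

lemma integral_sum_range_comp (hX : ∀ i, MeasurePreserving (X i) P ν)
    (hh : Integrable h ν) (n : ℕ) :
    ∫ ω, ∑ i ∈ range n, h (X i ω) ∂P = n * ∫ x, h x ∂ν := by
  have hcomp : ∀ i, ∫ ω, h (X i ω) ∂P = ∫ x, h x ∂ν := fun i => by
    rw [← (hX i).map_eq, integral_map (hX i).aemeasurable ((hX i).map_eq ▸ hh.aestronglyMeasurable)]
  rw [integral_finsetSum (f := fun i ω => h (X i ω)) _
    fun i _ => (hX i).integrable_comp_of_integrable hh]
  simp [hcomp]

lemma variance_sum_range_comp (hX : ∀ i, MeasurePreserving (X i) P ν)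
    (hindep : Pairwise fun i j => IndepFun (X i) (X j) P) (hh : Measurable h)
    (hL2 : MemLp h 2 ν) (n : ℕ) :
    Var[fun ω => ∑ i ∈ range n, h (X i ω); P] = n * Var[h; ν] := by
  have hsum := IndepFun.variance_sum (X := fun i ω => h (X i ω)) (s := range n)
    (fun i _ => hL2.comp_measurePreserving (hX i))
    (fun i _ j _ hij => (hindep hij).comp hh hh)
  have hcomp : ∀ i, Var[fun ω => h (X i ω); P] = Var[h; ν] := fun i =>
    (hX i).variance_fun_comp hh.aemeasurable
  simpa [Finset.sum_fn, hcomp] using hsum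

lemma measure_lt_abs_sqrt_mul_empirical_sub_le [IsFiniteMeasure P]
    (hX : ∀ i, MeasurePreserving (X i) P ν)
    (hindep : Pairwise fun i j => IndepFun (X i) (X j) P) (hh : Measurable h)
    (hL2 : MemLp h 2 ν) {δ : ℝ} (hδ : 0 < δ) (n : ℕ) :
    P {ω | δ < |Real.sqrt n * ((n : ℝ)⁻¹ * ∑ i ∈ range n, h (X i ω) - ∫ x, h x ∂ν)|}
      ≤ ENNReal.ofReal (Var[h; ν] / δ ^ 2) := by
  rcases n.eq_zero_or_pos with rfl | hn
  · simp [hδ.not_gt]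
  have hn' : (0 : ℝ) < n := by exact_mod_cast hn
  have hsqrt : 0 < Real.sqrt n := Real.sqrt_pos.2 hn'
  set S : Ω → ℝ := fun ω => ∑ i ∈ range n, h (X i ω)
  have : IsFiniteMeasure ν := by rw [← (hX 0).map_eq]; infer_instance
  have hS_L2 : MemLp S 2 P :=
    memLp_finsetSum _ fun i _ => hL2.comp_measurePreserving (hX i)
  have hS_mean : P[S] = n * ∫ x, h x ∂ν :=
    integral_sum_range_comp hX (hL2.integrable one_le_two) n
  have hsub : {ω | δ < |Real.sqrt n * ((n : ℝ)⁻¹ * S ω - ∫ x, h x ∂ν)|}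
      ⊆ {ω | δ * Real.sqrt n ≤ |S ω - P[S]|} := fun ω hω => by
    have hscale :
        S ω - P[S] = Real.sqrt n * ((n : ℝ)⁻¹ * S ω - ∫ x, h x ∂ν) * Real.sqrt n := by
      rw [hS_mean, mul_comm _ (Real.sqrt n), ← mul_assoc, Real.mul_self_sqrt hn'.le]
      field_simp
    rw [Set.mem_ofPred_eq, hscale, abs_mul, abs_of_pos hsqrt]
    exact (mul_lt_mul_of_pos_right hω hsqrt).le
  calc P _ ≤ P {ω | δ * Real.sqrt n ≤ |S ω - P[S]|} := measure_mono hsub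
    _ ≤ ENNReal.ofReal (Var[S; P] / (δ * Real.sqrt n) ^ 2) :=
      meas_ge_le_variance_div_sq hS_L2 (mul_pos hδ hsqrt)
    _ = ENNReal.ofReal (Var[h; ν] / δ ^ 2) := by
      rw [variance_sum_range_comp hX hindep hh hL2, mul_pow, Real.sq_sqrt hn'.le]
      congr 1
      field_simp

end Chebyshev

theorem stmt6_general
    {E : Type*} [MeasurableSpace E] (ν : Measure E) [IsProbabilityMeasure ν]
    {Ω : Type*} [MeasurableSpace Ω] (P : Measure Ω) [IsProbabilityMeasure P]
    (X : ℕ → Ω → E)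
    (hXmeas : ∀ i, Measurable (X i))
    (hXdist : ∀ i, Measure.map (X i) P = ν)
    (hXindep : iIndepFun X P)
    (f : ℕ → E → ℝ) (flim g : E → ℝ)
    (hfmeas : ∀ n, Measurable (f n))
    (hflimmeas : Measurable flim)
    (hlim : ∀ x, Tendsto (fun n => f n x) atTop (nhds (flim x)))
    (hdom : ∀ n x, |f n x| ≤ g x)
    (hg2 : Integrable (fun x => (g x) ^ 2) ν) :
    ∀ δ > (0 : ℝ), Tendsto (fun (n : ℕ) => P {ω | δ <
        |Real.sqrt n * ((n : ℝ)⁻¹ * ∑ i ∈ Finset.range n,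
            (f n (X i ω) - flim (X i ω)) - ∫ x, (f n x - flim x) ∂ν)|})
      atTop (nhds 0) := by
  intro δ hδ
  have hX : ∀ i, MeasurePreserving (X i) P ν := fun i => ⟨hXmeas i, hXdist i⟩
  have hindep : Pairwise fun i j => IndepFun (X i) (X j) P := fun _ _ hij => hXindep.indepFun hij
  have hmeas : ∀ n, Measurable fun x => f n x - flim x := fun n => (hfmeas n).sub hflimmeas
  have hL2 : ∀ n, MemLp (fun x => f n x - flim x) 2 ν := fun n =>
    (memLp_two_iff_integrable_sq (hmeas n).aestronglyMeasurable).2 <|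
      integrable_sq_sub_of_abs_le (hfmeas n).aestronglyMeasurable hflimmeas.aestronglyMeasurable
        (hdom n) (abs_le_of_tendsto_of_abs_le hlim hdom) hg2
  have hbound : Tendsto (fun n => ENNReal.ofReal ((∫ x, (f n x - flim x) ^ 2 ∂ν) / δ ^ 2))
      atTop (nhds 0) := by
    simpa using ENNReal.tendsto_ofReal <| (tendsto_integral_sq_sub_of_dominated
      (fun n => (hfmeas n).aestronglyMeasurable) hflimmeas.aestronglyMeasurable hlim hdom
      hg2).div_const (δ ^ 2)
  refine tendsto_of_tendsto_of_tendsto_of_le_of_le tendsto_const_nhds hbound (fun _ => zero_le)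
    fun n => (measure_lt_abs_sqrt_mul_empirical_sub_le hX hindep (hmeas n) (hL2 n) hδ n).trans ?_
  gcongr
  exact variance_le_expectation_sq (hmeas n).aestronglyMeasurable

/-- Let `(X i)` be IID with common law `ν`, and let `(f n)`, `flim`, `g`
be measurable real functions with `f n → flim` pointwise, `|f n| ≤ g` and `∫ g² dν < ∞`.
Then `√n ( (1/n) ∑_{i<n} (f n (X i) - flim (X i)) - ∫ (f n - flim) dν ) → 0` in
probability. -/
theorem stmt6
    {E : Type*} [MeasurableSpace E] (ν : Measure E) [IsProbabilityMeasure ν]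
    {Ω : Type*} [MeasurableSpace Ω] (P : Measure Ω) [IsProbabilityMeasure P]
    (X : ℕ → Ω → E)
    (hXmeas : ∀ i, Measurable (X i))
    (hXdist : ∀ i, Measure.map (X i) P = ν)
    (hXindep : iIndepFun X P)
    (f : ℕ → E → ℝ) (flim g : E → ℝ)
    (hfmeas : ∀ n, Measurable (f n))
    (hflimmeas : Measurable flim)
    (hgmeas : Measurable g)
    (hlim : ∀ x, Tendsto (fun n => f n x) atTop (nhds (flim x)))
    (hdom : ∀ n x, |f n x| ≤ g x)
    (hg2 : Integrable (fun x => (g x) ^ 2) ν) :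
    ∀ δ > (0 : ℝ), Tendsto (fun (n : ℕ) => P {ω | δ <
        |Real.sqrt n * ((n : ℝ)⁻¹ * ∑ i ∈ Finset.range n,
            (f n (X i ω) - flim (X i ω)) - ∫ x, (f n x - flim x) ∂ν)|})
      atTop (nhds 0) :=
  stmt6_general ν P X hXmeas hXdist hXindep f flim g hfmeas hflimmeas hlim hdom hg2
end

section
/- Let L : ℝ^d → ℝ and Z : ℝ^d → (0, ∞) be twice continuously differentiable in a neighborhood of a point θ̂ ∈ ℝ^d. Define the extended function F : ℝ^d × ℝ → ℝ by F(θ, ν) = L(θ) + ν − e^ν · Z(θ), and the function ℓ : ℝ^d → ℝ by ℓ(θ) = L(θ) − log Z(θ). Set ν̂ = −log Z(θ̂), so that e^{ν̂} · Z(θ̂) = 1. Then the (d+1)×(d+1) Hessian matrix of F at the point (θ̂, ν̂) is negative definite if and only if the d×d Hessian matrix of ℓ at θ̂ is negative definite. -/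
/-!
Write `Hf x v = D(y ↦ Df(y) v)(x) v` for the Hessian quadratic form. The product and chain rules
for `H` give, in a direction `(u, t)`,
`HF(θ, ν)(u, t) = HL(θ) u - e^ν (t² Z(θ) + 2 t DZ(θ) u + HZ(θ) u)` and
`Hℓ(θ) u = HL(θ) u - HZ(θ) u / Z(θ) + (DZ(θ) u / Z(θ))²`, so at `ν̂`, where `e^ν̂ = 1 / Z(θ̂)`,
the two forms differ by a completed square: `HF(θ̂, ν̂)(u, t) = Hℓ(θ̂) u - (t + DZ(θ̂) u / Z(θ̂))²`.
Taking `t = -DZ(θ̂) u / Z(θ̂)` transfers negativity from `HF` to `Hℓ`; conversely the square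
is nonnegative, and for `u = 0`, `t ≠ 0` it alone makes `HF` negative.
-/

open ContinuousLinearMap

def NegDefinite {E : Type*} [Zero E] (q : E → ℝ) : Prop := ∀ v, v ≠ 0 → q v < 0

theorem negDefinite_sub_sq_iff {E : Type*} [Zero E] {q b : E → ℝ} (hq : q 0 = 0)
    (hb : b 0 = 0) :
    NegDefinite (fun v : E × ℝ => q v.1 - (v.2 + b v.1) ^ 2) ↔ NegDefinite q := by
  constructor
  · intro h u hu
    simpa using h (u, -b u) (by simp [hu])
  · rintro h ⟨u, t⟩ hv
    by_cases hu : u = 0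
    · subst hu
      have ht : t ≠ 0 := by simpa using hv
      simpa [hq, hb] using pow_two_pos_of_ne_zero ht
    · nlinarith [h u hu, sq_nonneg (t + b u)]

section HessianForm

variable {𝕜 E F : Type*} [NontriviallyNormedField 𝕜]
  [NormedAddCommGroup E] [NormedSpace 𝕜 E] [NormedAddCommGroup F] [NormedSpace 𝕜 F]

noncomputable def hessianForm (f : E → 𝕜) (x v : E) : 𝕜 :=
  fderiv 𝕜 (fun y => fderiv 𝕜 f y v) x v

variable {f g : E → 𝕜} {x : E}

theorem ContDiffAt.differentiableAt_fderiv_apply (hf : ContDiffAt 𝕜 2 f x) (v : E) :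
    DifferentiableAt 𝕜 (fun y => fderiv 𝕜 f y v) x :=
  ((hf.fderiv_right (m := 1) le_rfl).differentiableAt one_ne_zero).clm_apply
    (differentiableAt_const v)

theorem ContDiffAt.eventually_differentiableAt (hf : ContDiffAt 𝕜 2 f x) :
    ∀ᶠ y in nhds x, DifferentiableAt 𝕜 f y :=
  (hf.eventually (by simp)).mono fun _ hy => hy.differentiableAt two_ne_zero

theorem hessianForm_zero_right (f : E → 𝕜) (x : E) : hessianForm f x 0 = 0 := by
  simp [hessianForm]

theorem hessianForm_continuousLinearMap (A : E →L[𝕜] 𝕜) (x v : E) :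
    hessianForm A x v = 0 := by
  simp [hessianForm, A.fderiv]

theorem hessianForm_eq_of_eventuallyEq {v : E} {φ : E → 𝕜} {φ' : E →L[𝕜] 𝕜}
    (hD : (fun y => fderiv 𝕜 f y v) =ᶠ[nhds x] φ) (hφ : HasFDerivAt φ φ' x) :
    hessianForm f x v = φ' v := by
  rw [hessianForm, hD.fderiv_eq, hφ.fderiv]

theorem hessianForm_add (hf : ContDiffAt 𝕜 2 f x) (hg : ContDiffAt 𝕜 2 g x) (v : E) :
    hessianForm (fun y => f y + g y) x v = hessianForm f x v + hessianForm g x v := by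
  refine hessianForm_eq_of_eventuallyEq (φ := fun y => fderiv 𝕜 f y v + fderiv 𝕜 g y v) ?_
    ((hf.differentiableAt_fderiv_apply v).hasFDerivAt.add
      (hg.differentiableAt_fderiv_apply v).hasFDerivAt)
  filter_upwards [hf.eventually_differentiableAt, hg.eventually_differentiableAt] with y hfy hgy
  rw [fderiv_fun_add hfy hgy, add_apply]

theorem hessianForm_sub (hf : ContDiffAt 𝕜 2 f x) (hg : ContDiffAt 𝕜 2 g x) (v : E) :
    hessianForm (fun y => f y - g y) x v = hessianForm f x v - hessianForm g x v := by
  refine hessianForm_eq_of_eventuallyEq (φ := fun y => fderiv 𝕜 f y v - fderiv 𝕜 g y v) ?_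
    ((hf.differentiableAt_fderiv_apply v).hasFDerivAt.sub
      (hg.differentiableAt_fderiv_apply v).hasFDerivAt)
  filter_upwards [hf.eventually_differentiableAt, hg.eventually_differentiableAt] with y hfy hgy
  rw [fderiv_fun_sub hfy hgy, sub_apply]

theorem hessianForm_mul (hf : ContDiffAt 𝕜 2 f x) (hg : ContDiffAt 𝕜 2 g x) (v : E) :
    hessianForm (fun y => f y * g y) x v =
      hessianForm f x v * g x + 2 * (fderiv 𝕜 f x v * fderiv 𝕜 g x v)
        + f x * hessianForm g x v := by
  have hf1 := (hf.differentiableAt two_ne_zero).hasFDerivAt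
  have hg1 := (hg.differentiableAt two_ne_zero).hasFDerivAt
  rw [hessianForm_eq_of_eventuallyEq
    (φ := fun y => f y * fderiv 𝕜 g y v + g y * fderiv 𝕜 f y v) ?_
    ((hf1.mul (hg.differentiableAt_fderiv_apply v).hasFDerivAt).add
      (hg1.mul (hf.differentiableAt_fderiv_apply v).hasFDerivAt))]
  · simp only [hessianForm, add_apply, smul_apply, smul_eq_mul]
    ring
  filter_upwards [hf.eventually_differentiableAt, hg.eventually_differentiableAt] with y hfy hgy
  rw [fderiv_fun_mul hfy hgy]
  simp only [add_apply, smul_apply, smul_eq_mul]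

theorem hessianForm_comp_continuousLinearMap {f : F → 𝕜} (A : E →L[𝕜] F)
    (hf : ContDiffAt 𝕜 2 f (A x)) (v : E) :
    hessianForm (fun y => f (A y)) x v = hessianForm f (A x) (A v) := by
  refine hessianForm_eq_of_eventuallyEq (φ := fun y => fderiv 𝕜 f (A y) (A v)) ?_
    ((hf.differentiableAt_fderiv_apply (A v)).hasFDerivAt.comp x A.hasFDerivAt)
  filter_upwards [A.continuous.continuousAt.eventually hf.eventually_differentiableAt] with y hfy
  exact congrArg (· v) (hfy.hasFDerivAt.comp y A.hasFDerivAt).fderiv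

theorem hessianForm_comp {g : 𝕜 → 𝕜} (hg : ContDiffAt 𝕜 2 g (f x)) (hf : ContDiffAt 𝕜 2 f x)
    (v : E) :
    hessianForm (fun y => g (f y)) x v =
      deriv (deriv g) (f x) * fderiv 𝕜 f x v ^ 2 + deriv g (f x) * hessianForm f x v := by
  have hdg : HasFDerivAt (fun y => deriv g (f y)) (deriv (deriv g) (f x) • fderiv 𝕜 f x) x :=
    (hg.differentiableAt_fderiv_apply 1).hasDerivAt.comp_hasFDerivAt x
      (hf.differentiableAt two_ne_zero).hasFDerivAt
  rw [hessianForm_eq_of_eventuallyEq (φ := fun y => deriv g (f y) * fderiv 𝕜 f y v) ?_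
    (hdg.mul (hf.differentiableAt_fderiv_apply v).hasFDerivAt)]
  · simp only [hessianForm, add_apply, smul_apply, smul_eq_mul]
    ring
  filter_upwards [hf.continuousAt.eventually hg.eventually_differentiableAt,
    hf.eventually_differentiableAt] with y hgy hfy
  exact congrArg (· v) (hgy.hasDerivAt.comp_hasFDerivAt y hfy.hasFDerivAt).fderiv

end HessianForm

section PoissonTransform

variable {E : Type*} [NormedAddCommGroup E] [NormedSpace ℝ E] {L Z : E → ℝ} {θ : E}

theorem hessianForm_poissonTransform (hL : ContDiffAt ℝ 2 L θ) (hZ : ContDiffAt ℝ 2 Z θ)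
    (ν : ℝ) (v : E × ℝ) :
    hessianForm (fun y : E × ℝ => L y.1 + y.2 - Real.exp y.2 * Z y.1) (θ, ν) v =
      hessianForm L θ v.1 -
        Real.exp ν * (v.2 ^ 2 * Z θ + 2 * (v.2 * fderiv ℝ Z θ v.1) + hessianForm Z θ v.1) := by
  set p : E × ℝ := (θ, ν)
  have hLp : ContDiffAt ℝ 2 (fun y : E × ℝ => L y.1) p := hL.comp p contDiffAt_fst
  have hZp : ContDiffAt ℝ 2 (fun y : E × ℝ => Z y.1) p := hZ.comp p contDiffAt_fst
  have hexp : ContDiffAt ℝ 2 (fun y : E × ℝ => Real.exp y.2) p :=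
    Real.contDiff_exp.contDiffAt.comp p contDiffAt_snd
  have hsnd : hessianForm (fun y : E × ℝ => y.2) p v = 0 :=
    hessianForm_continuousLinearMap (snd ℝ E ℝ) p v
  have hexp_snd : hessianForm (fun y : E × ℝ => Real.exp y.2) p v = Real.exp ν * v.2 ^ 2 := by
    rw [hessianForm_comp (g := Real.exp) (f := fun y : E × ℝ => y.2)
      Real.contDiff_exp.contDiffAt contDiffAt_snd, hsnd, fderiv_snd]
    simp [p]
  have hLfst : hessianForm (fun y : E × ℝ => L y.1) p v = hessianForm L θ v.1 :=
    hessianForm_comp_continuousLinearMap (fst ℝ E ℝ) hL v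
  have hZfst : hessianForm (fun y : E × ℝ => Z y.1) p v = hessianForm Z θ v.1 :=
    hessianForm_comp_continuousLinearMap (fst ℝ E ℝ) hZ v
  have hdexp : fderiv ℝ (fun y : E × ℝ => Real.exp y.2) p v = Real.exp ν * v.2 :=
    congrArg (· v) (hasFDerivAt_snd (p := p)).exp.fderiv
  have hdZ : fderiv ℝ (fun y : E × ℝ => Z y.1) p v = fderiv ℝ Z θ v.1 := by
    have h : HasFDerivAt (fun y : E × ℝ => Z y.1) ((fderiv ℝ Z θ).comp (fst ℝ E ℝ)) p :=
      (hZ.differentiableAt two_ne_zero).hasFDerivAt.comp p hasFDerivAt_fst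
    rw [h.fderiv]
    rfl
  rw [hessianForm_sub (hLp.add contDiffAt_snd) (hexp.mul hZp),
    hessianForm_add hLp contDiffAt_snd, hessianForm_mul hexp hZp, hsnd, hexp_snd, hdexp, hdZ,
    hLfst, hZfst]
  ring

theorem hessianForm_sub_log (hL : ContDiffAt ℝ 2 L θ) (hZ : ContDiffAt ℝ 2 Z θ) (hZθ : Z θ ≠ 0)
    (u : E) :
    hessianForm (fun y => L y - Real.log (Z y)) θ u =
      hessianForm L θ u - (hessianForm Z θ u / Z θ - (fderiv ℝ Z θ u / Z θ) ^ 2) := by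
  have hlog : ContDiffAt ℝ 2 Real.log (Z θ) := Real.contDiffAt_log.2 hZθ
  rw [hessianForm_sub (g := fun y => Real.log (Z y)) hL (hlog.comp θ hZ),
    hessianForm_comp hlog hZ]
  simp only [Real.deriv_log', deriv_inv]
  ring

theorem hessianForm_poissonTransform_at_normalizer (hL : ContDiffAt ℝ 2 L θ)
    (hZ : ContDiffAt ℝ 2 Z θ) (hZθ : 0 < Z θ) (v : E × ℝ) :
    hessianForm (fun y : E × ℝ => L y.1 + y.2 - Real.exp y.2 * Z y.1) (θ, -Real.log (Z θ)) v =
      hessianForm (fun y => L y - Real.log (Z y)) θ v.1 - (v.2 + fderiv ℝ Z θ v.1 / Z θ) ^ 2 := by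
  rw [hessianForm_poissonTransform hL hZ, hessianForm_sub_log hL hZ hZθ.ne',
    Real.exp_neg, Real.exp_log hZθ]
  field_simp
  ring

end PoissonTransform

/-- Let `L, Z : ℝ^d → ℝ` be twice continuously differentiable in a
neighborhood `s` of `θhat`, with `Z > 0`. Define the Poisson-transform
`F (θ, ν) = L θ + ν - e^ν Z θ` and the log-likelihood `ℓ θ = L θ - log (Z θ)`, and set
`ν̂ = -log (Z θhat)` (so `e^ν̂ Z θhat = 1`). Then the Hessian of `F` at `(θhat, ν̂)` is
negative definite iff the Hessian of `ℓ` at `θhat` is negative definite. Here the Hessian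
quadratic form of `G` at `a` applied to `v` is `D(x ↦ DG(x)(v))(a)(v)`. -/
theorem stmt8
    {d : ℕ}
    (L Z : EuclideanSpace ℝ (Fin d) → ℝ)
    (θhat : EuclideanSpace ℝ (Fin d))
    (hZpos : ∀ θ, 0 < Z θ)
    (s : Set (EuclideanSpace ℝ (Fin d))) (hs : s ∈ nhds θhat)
    (hL : ContDiffOn ℝ 2 L s) (hZ : ContDiffOn ℝ 2 Z s) :
    (∀ v : EuclideanSpace ℝ (Fin d) × ℝ, v ≠ 0 →
        fderiv ℝ
          (fun x : EuclideanSpace ℝ (Fin d) × ℝ =>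
            fderiv ℝ (fun y : EuclideanSpace ℝ (Fin d) × ℝ =>
              L y.1 + y.2 - Real.exp y.2 * Z y.1) x v)
          (θhat, -Real.log (Z θhat)) v < 0)
    ↔ (∀ u : EuclideanSpace ℝ (Fin d), u ≠ 0 →
        fderiv ℝ
          (fun x => fderiv ℝ (fun y => L y - Real.log (Z y)) x u) θhat u < 0) := by
  change NegDefinite (hessianForm _ _) ↔ NegDefinite (hessianForm _ θhat)
  rw [funext (hessianForm_poissonTransform_at_normalizer (hL.contDiffAt hs) (hZ.contDiffAt hs) (hZpos θhat))]
  exact negDefinite_sub_sq_iff (hessianForm_zero_right _ _)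
    (b := fun u => fderiv ℝ Z θhat u / Z θhat) (by rw [map_zero, zero_div])
end

section
/- Let n, m ≥ 1, let A₁, A₂ be real symmetric positive definite n×n matrices, let B₁, B₂ be real n×m matrices, and let λ ∈ [0, 1]. Then the m×m matrix λ·B₁ᵀA₁⁻¹B₁ + (1−λ)·B₂ᵀA₂⁻¹B₂ − (λB₁ + (1−λ)B₂)ᵀ (λA₁ + (1−λ)A₂)⁻¹ (λB₁ + (1−λ)B₂) is positive semi-definite; that is, the map (A, B) ↦ BᵀA⁻¹B is convex with respect to the Loewner order on the set of pairs of a positive definite matrix and an arbitrary n×m matrix. -/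
/-!
The block matrix `[[A, B], [Bᴴ, Bᴴ A⁻¹ B]]` is positive semidefinite, its Schur complement being
zero. Positive semidefiniteness is preserved by convex combinations, and the combination of the
two block matrices is again of the form `[[A, B], [Bᴴ, D]]`; its Schur complement
`D - Bᴴ A⁻¹ B` is the Jensen gap of `(A, B) ↦ Bᴴ A⁻¹ B`, hence positive semidefinite.
-/

open Matrix

namespace Matrix.PosDef

variable {K m n : Type*} [Field K] [PartialOrder K] [StarRing K] [StarOrderedRing K]

theorem smul_add_smul {A₁ A₂ : Matrix n n K} (hA₁ : A₁.PosDef) (hA₂ : A₂.PosDef) {a b : K}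
    (ha : 0 ≤ a) (hb : 0 ≤ b) (hab : 0 < a + b) : (a • A₁ + b • A₂).PosDef := by
  rcases ha.eq_or_lt with rfl | ha
  · rw [zero_smul, zero_add]
    exact hA₂.smul (by simpa using hab)
  · exact (hA₁.smul ha).add_posSemidef (hA₂.posSemidef.smul hb)

variable [Fintype m] [Fintype n] [DecidableEq n]

theorem fromBlocks_conjTranspose_mul_inv_mul_posSemidef {A : Matrix n n K} (hA : A.PosDef)
    (B : Matrix n m K) : (fromBlocks A B Bᴴ (Bᴴ * A⁻¹ * B)).PosSemidef := by
  have := hA.isUnit.invertible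
  rw [hA.fromBlocks₁₁ B _, sub_self]
  exact .zero

theorem conjTranspose_mul_inv_mul_convex {A₁ A₂ : Matrix n n K} (hA₁ : A₁.PosDef)
    (hA₂ : A₂.PosDef) (B₁ B₂ : Matrix n m K) {a b : K} (ha : 0 ≤ a) (hb : 0 ≤ b)
    (hab : 0 < a + b) :
    (a • (B₁ᴴ * A₁⁻¹ * B₁) + b • (B₂ᴴ * A₂⁻¹ * B₂)
      - (a • B₁ + b • B₂)ᴴ * (a • A₁ + b • A₂)⁻¹ * (a • B₁ + b • B₂)).PosSemidef := by
  have hA := smul_add_smul hA₁ hA₂ ha hb hab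
  have := hA.isUnit.invertible
  have hblocks := ((fromBlocks_conjTranspose_mul_inv_mul_posSemidef hA₁ B₁).smul ha).add
    ((fromBlocks_conjTranspose_mul_inv_mul_posSemidef hA₂ B₂).smul hb)
  have hB : (a • B₁ + b • B₂)ᴴ = a • B₁ᴴ + b • B₂ᴴ := by
    rw [conjTranspose_add, conjTranspose_smul, conjTranspose_smul,
      (IsSelfAdjoint.of_nonneg ha).star_eq, (IsSelfAdjoint.of_nonneg hb).star_eq]
  rw [fromBlocks_smul, fromBlocks_smul, fromBlocks_add, ← hB] at hblocks
  exact (hA.fromBlocks₁₁ _ _).1 hblocks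

end Matrix.PosDef

theorem stmt10_general
    {n m : ℕ}
    (A₁ A₂ : Matrix (Fin n) (Fin n) ℝ) (hA₁ : A₁.PosDef) (hA₂ : A₂.PosDef)
    (B₁ B₂ : Matrix (Fin n) (Fin m) ℝ)
    (lam : ℝ) (hlam0 : 0 ≤ lam) (hlam1 : lam ≤ 1) :
    (lam • (B₁ᵀ * A₁⁻¹ * B₁) + (1 - lam) • (B₂ᵀ * A₂⁻¹ * B₂)
      - (lam • B₁ + (1 - lam) • B₂)ᵀ * (lam • A₁ + (1 - lam) • A₂)⁻¹
        * (lam • B₁ + (1 - lam) • B₂)).PosSemidef := by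
  simpa only [conjTranspose_eq_transpose_of_trivial] using
    hA₁.conjTranspose_mul_inv_mul_convex hA₂ B₁ B₂ hlam0 (sub_nonneg.2 hlam1) (by simp)

/-- Joint convexity, in the Loewner order, of `(A, B) ↦ Bᵀ A⁻¹ B`:
for positive definite `A₁, A₂`, arbitrary `B₁, B₂` and `λ ∈ [0,1]`,
`λ B₁ᵀA₁⁻¹B₁ + (1-λ) B₂ᵀA₂⁻¹B₂ - (λB₁+(1-λ)B₂)ᵀ (λA₁+(1-λ)A₂)⁻¹ (λB₁+(1-λ)B₂)`
is positive semi-definite. -/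
theorem stmt10
    {n m : ℕ} (hn : 1 ≤ n) (hm : 1 ≤ m)
    (A₁ A₂ : Matrix (Fin n) (Fin n) ℝ) (hA₁ : A₁.PosDef) (hA₂ : A₂.PosDef)
    (B₁ B₂ : Matrix (Fin n) (Fin m) ℝ)
    (lam : ℝ) (hlam0 : 0 ≤ lam) (hlam1 : lam ≤ 1) :
    (lam • (B₁ᵀ * A₁⁻¹ * B₁) + (1 - lam) • (B₂ᵀ * A₂⁻¹ * B₂)
      - (lam • B₁ + (1 - lam) • B₂)ᵀ * (lam • A₁ + (1 - lam) • A₂)⁻¹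
        * (lam • B₁ + (1 - lam) • B₂)).PosSemidef :=
  stmt10_general A₁ A₂ hA₁ hA₂ B₁ B₂ lam hlam0 hlam1
end

section
/- Let (Ω, 𝔉, P) be a probability space, V : Ω → ℝ^n a random vector, and R : Ω → (0, ∞) a measurable function, such that all entries of the random matrices V Vᵀ · R, V Vᵀ, and V Vᵀ / R are integrable, and such that the matrix E[V Vᵀ · R] is invertible. Then the n×n matrix E[V Vᵀ / R] − E[V Vᵀ] · (E[V Vᵀ · R])⁻¹ · E[V Vᵀ] is positive semi-definite. -/
/-!
With `X = V / √R` and `Y = V √R`, the three matrices are the moment matrices `E[X Xᵀ]`,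
`E[X Yᵀ] = E[Y Xᵀ]` and `E[Y Yᵀ]`. The second-moment matrix of the stacked vector `(X, Y)` is
positive semidefinite, so, its block `E[Y Yᵀ]` being invertible, so is its Schur complement
`E[X Xᵀ] - E[X Yᵀ] E[Y Yᵀ]⁻¹ E[Y Xᵀ]`: a matrix Cauchy–Schwarz inequality.
-/

open MeasureTheory Matrix

namespace MeasureTheory

variable {Ω ι κ : Type*} [MeasurableSpace Ω] {P : Measure Ω}

noncomputable def momentMatrix (P : Measure Ω) (X : Ω → ι → ℝ) (Y : Ω → κ → ℝ) : Matrix ι κ ℝ :=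
  Matrix.of fun i j => ∫ ω, X ω i * Y ω j ∂P

lemma momentMatrix_transpose (X : Ω → ι → ℝ) (Y : Ω → κ → ℝ) :
    (momentMatrix P X Y)ᵀ = momentMatrix P Y X := by
  ext i j
  simp only [transpose_apply, momentMatrix, of_apply, mul_comm]

lemma dotProduct_momentMatrix_self_mulVec [Fintype ι] {X : Ω → ι → ℝ}
    (hX : ∀ i j, Integrable (fun ω => X ω i * X ω j) P) (x : ι → ℝ) :
    x ⬝ᵥ momentMatrix P X X *ᵥ x = ∫ ω, (x ⬝ᵥ X ω) ^ 2 ∂P := by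
  have hterm : ∀ i j, Integrable (fun ω => x i * (X ω i * X ω j) * x j) P :=
    fun i j => ((hX i j).const_mul (x i)).mul_const (x j)
  calc x ⬝ᵥ momentMatrix P X X *ᵥ x
      = ∑ i, ∑ j, ∫ ω, x i * (X ω i * X ω j) * x j ∂P := by
        simp only [dotProduct, mulVec, momentMatrix, of_apply, Finset.mul_sum]
        refine Finset.sum_congr rfl fun i _ => Finset.sum_congr rfl fun j _ => ?_
        rw [integral_mul_const, integral_const_mul, mul_assoc]
    _ = ∫ ω, ∑ i, ∑ j, x i * (X ω i * X ω j) * x j ∂P := by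
        rw [integral_finsetSum _ fun i _ => integrable_finsetSum _ fun j _ => hterm i j]
        exact Finset.sum_congr rfl fun i _ => (integral_finsetSum _ fun j _ => hterm i j).symm
    _ = ∫ ω, (x ⬝ᵥ X ω) ^ 2 ∂P := by
        congr 1 with ω
        simp only [dotProduct, sq, Finset.sum_mul_sum]
        exact Finset.sum_congr rfl fun i _ => Finset.sum_congr rfl fun j _ => by ring

lemma posSemidef_momentMatrix_self [Fintype ι] {X : Ω → ι → ℝ}
    (hX : ∀ i j, Integrable (fun ω => X ω i * X ω j) P) :
    (momentMatrix P X X).PosSemidef := by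
  refine posSemidef_iff_dotProduct_mulVec.mpr ⟨momentMatrix_transpose X X, fun x => ?_⟩
  rw [star_trivial, dotProduct_momentMatrix_self_mulVec hX]
  exact integral_nonneg fun ω => sq_nonneg _

lemma momentMatrix_sumElim (X : Ω → ι → ℝ) (Y : Ω → κ → ℝ) :
    momentMatrix P (fun ω => Sum.elim (X ω) (Y ω)) (fun ω => Sum.elim (X ω) (Y ω)) =
      fromBlocks (momentMatrix P X X) (momentMatrix P X Y)
        (momentMatrix P Y X) (momentMatrix P Y Y) := by
  ext (i | i) (j | j) <;> rfl

theorem posSemidef_momentMatrix_sub_mul_inv_mul [Fintype ι] [Fintype κ] [DecidableEq κ]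
    {X : Ω → ι → ℝ} {Y : Ω → κ → ℝ}
    (hXX : ∀ i j, Integrable (fun ω => X ω i * X ω j) P)
    (hXY : ∀ i j, Integrable (fun ω => X ω i * Y ω j) P)
    (hYY : ∀ i j, Integrable (fun ω => Y ω i * Y ω j) P)
    (hdet : IsUnit (momentMatrix P Y Y).det) :
    (momentMatrix P X X - momentMatrix P X Y * (momentMatrix P Y Y)⁻¹ *
      momentMatrix P Y X).PosSemidef := by
  have hW : ∀ a b, Integrable
      (fun ω => Sum.elim (X ω) (Y ω) a * Sum.elim (X ω) (Y ω) b) P := by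
    rintro (i | i) (j | j)
    · exact hXX i j
    · exact hXY i j
    · simpa only [Sum.elim_inr, Sum.elim_inl, mul_comm] using hXY j i
    · exact hYY i j
  have hYpos : (momentMatrix P Y Y).PosDef :=
    (posSemidef_momentMatrix_self hYY).posDef_iff_det_ne_zero.mpr hdet.ne_zero
  let _ := invertibleOfIsUnitDet _ hdet
  have hblocks := posSemidef_momentMatrix_self hW
  rw [momentMatrix_sumElim, ← momentMatrix_transpose Y X] at hblocks
  rw [← momentMatrix_transpose Y X]
  exact (PosDef.fromBlocks₂₂ _ _ hYpos).mp hblocks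

end MeasureTheory

theorem stmt11_general
    {n : ℕ} {Ω : Type*} [MeasurableSpace Ω] (P : Measure Ω)
    (V : Ω → Fin n → ℝ) (R : Ω → ℝ)
    (hRpos : ∀ ω, 0 < R ω)
    (hint1 : ∀ i j, Integrable (fun ω => V ω i * V ω j * R ω) P)
    (hint2 : ∀ i j, Integrable (fun ω => V ω i * V ω j) P)
    (hint3 : ∀ i j, Integrable (fun ω => V ω i * V ω j / R ω) P)
    (hinv : IsUnit ((Matrix.of fun i j => ∫ ω, V ω i * V ω j * R ω ∂P :
        Matrix (Fin n) (Fin n) ℝ)).det) :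
    ((Matrix.of fun i j => ∫ ω, V ω i * V ω j / R ω ∂P : Matrix (Fin n) (Fin n) ℝ)
      - (Matrix.of fun i j => ∫ ω, V ω i * V ω j ∂P : Matrix (Fin n) (Fin n) ℝ)
        * (Matrix.of fun i j => ∫ ω, V ω i * V ω j * R ω ∂P : Matrix (Fin n) (Fin n) ℝ)⁻¹
        * (Matrix.of fun i j => ∫ ω, V ω i * V ω j ∂P : Matrix (Fin n) (Fin n) ℝ)).PosSemidef := by
  set X : Ω → Fin n → ℝ := fun ω i => V ω i / √(R ω)
  set Y : Ω → Fin n → ℝ := fun ω i => V ω i * √(R ω)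
  have hsqrt ω : √(R ω) * √(R ω) = R ω := Real.mul_self_sqrt (hRpos ω).le
  have hsqrt_ne ω : √(R ω) ≠ 0 := (Real.sqrt_pos.mpr (hRpos ω)).ne'
  have hXX ω i j : X ω i * X ω j = V ω i * V ω j / R ω := by
    simp only [X, div_mul_div_comm, hsqrt]
  have hXY ω i j : X ω i * Y ω j = V ω i * V ω j := by
    simp only [X, Y]; field_simp [hsqrt_ne ω]
  have hYX ω i j : Y ω i * X ω j = V ω i * V ω j := by
    rw [mul_comm, hXY, mul_comm]
  have hYY ω i j : Y ω i * Y ω j = V ω i * V ω j * R ω := by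
    simp only [Y, mul_mul_mul_comm, hsqrt]
  have hschur := posSemidef_momentMatrix_sub_mul_inv_mul (P := P) (X := X) (Y := Y)
    (by simpa only [hXX] using hint3) (by simpa only [hXY] using hint2)
    (by simpa only [hYY] using hint1) (by simpa only [momentMatrix, hYY] using hinv)
  simpa only [momentMatrix, hXX, hXY, hYX, hYY] using hschur

/-- Let `V : Ω → ℝ^n` be a random vector and `R : Ω → (0,∞)` measurable,
with all entries of `V Vᵀ R`, `V Vᵀ` and `V Vᵀ / R` integrable, and with `E[V Vᵀ R]`
invertible. Then `E[V Vᵀ / R] - E[V Vᵀ] (E[V Vᵀ R])⁻¹ E[V Vᵀ]` is positive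
semi-definite. -/
theorem stmt11
    {n : ℕ} {Ω : Type*} [MeasurableSpace Ω] (P : Measure Ω) [IsProbabilityMeasure P]
    (V : Ω → Fin n → ℝ) (R : Ω → ℝ)
    (hV : Measurable V) (hR : Measurable R) (hRpos : ∀ ω, 0 < R ω)
    (hint1 : ∀ i j, Integrable (fun ω => V ω i * V ω j * R ω) P)
    (hint2 : ∀ i j, Integrable (fun ω => V ω i * V ω j) P)
    (hint3 : ∀ i j, Integrable (fun ω => V ω i * V ω j / R ω) P)
    (hinv : IsUnit ((Matrix.of fun i j => ∫ ω, V ω i * V ω j * R ω ∂P :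
        Matrix (Fin n) (Fin n) ℝ)).det) :
    ((Matrix.of fun i j => ∫ ω, V ω i * V ω j / R ω ∂P : Matrix (Fin n) (Fin n) ℝ)
      - (Matrix.of fun i j => ∫ ω, V ω i * V ω j ∂P : Matrix (Fin n) (Fin n) ℝ)
        * (Matrix.of fun i j => ∫ ω, V ω i * V ω j * R ω ∂P : Matrix (Fin n) (Fin n) ℝ)⁻¹
        * (Matrix.of fun i j => ∫ ω, V ω i * V ω j ∂P : Matrix (Fin n) (Fin n) ℝ)).PosSemidef :=
  stmt11_general P V R hRpos hint1 hint2 hint3 hinv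
end

section
/- Let (Ω, 𝔉, P) be a probability space, V : Ω → ℝ^n a random vector, and R : Ω → (0, ∞) a measurable function, such that all entries of the random matrices V Vᵀ · R, V Vᵀ, and V Vᵀ / R are integrable, and such that both J = E[V Vᵀ] and J_R = E[V Vᵀ · R] are invertible. Then J⁻¹ · E[V Vᵀ / R] · J⁻¹ − J_R⁻¹ is positive semi-definite. (This is the matrix inequality to which the comparison of the IID asymptotic variances of the MC-MLE and NCE estimators reduces: with V = ∇_ξ g_ξ(Y) and R = τ f_ψ(Y)/(τ f_ψ(Y) + f_θ(Y)), it expresses V^IS_τ(ξ*) ⪰ V^NCE_τ(ξ*).) -/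
/-!
The block matrix `[[E[V Vᵀ / R], J], [J, J_R]]` is the second-moment matrix of the random
vector `(V / √R, V √R)`, hence positive semi-definite. Since `J_R` is positive semi-definite and
invertible, it is positive definite, so the Schur complement `E[V Vᵀ / R] - J J_R⁻¹ J` is positive
semi-definite, and conjugating it by the symmetric matrix `J⁻¹` gives the claim.
-/

open MeasureTheory Matrix
open scoped ComplexOrder

lemma posSemidef_inv_mul_mul_inv_sub_inv {ι 𝕜 : Type*} [Fintype ι] [DecidableEq ι] [RCLike 𝕜]
    {M J D : Matrix ι ι 𝕜} (hJ : IsUnit J.det) (hJh : J.IsHermitian) (hD : D.PosDef)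
    (h : (fromBlocks M J Jᴴ D).PosSemidef) : (J⁻¹ * M * J⁻¹ - D⁻¹).PosSemidef := by
  have := invertibleOfIsUnitDet D ((isUnit_iff_isUnit_det D).1 hD.isUnit)
  have hSchur : (M - J * D⁻¹ * J).PosSemidef := by
    simpa only [hJh.eq] using (PosDef.fromBlocks₂₂ M J hD).1 h
  convert hSchur.conjTranspose_mul_mul_same J⁻¹ using 1
  rw [conjTranspose_nonsing_inv, hJh.eq, Matrix.mul_sub, Matrix.sub_mul]
  simp only [← Matrix.mul_assoc, nonsing_inv_mul J hJ, Matrix.one_mul]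
  simp only [Matrix.mul_assoc, mul_nonsing_inv J hJ, Matrix.mul_one]

section SecondMoment

variable {ι Ω : Type*} [Fintype ι] [MeasurableSpace Ω] {μ : Measure Ω}

lemma dotProduct_mulVec_integral_mul {f : Ω → ι → ℝ}
    (hf : ∀ i j, Integrable (fun ω => f ω i * f ω j) μ) (x y : ι → ℝ) :
    x ⬝ᵥ (of (fun i j => ∫ ω, f ω i * f ω j ∂μ) *ᵥ y) = ∫ ω, (x ⬝ᵥ f ω) * (y ⬝ᵥ f ω) ∂μ := by
  have hpt : ∀ ω, (x ⬝ᵥ f ω) * (y ⬝ᵥ f ω) = ∑ i, ∑ j, x i * y j * (f ω i * f ω j) := by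
    intro ω
    rw [dotProduct, dotProduct, Finset.sum_mul_sum]
    exact Finset.sum_congr rfl fun i _ => Finset.sum_congr rfl fun j _ => by ring
  simp_rw [hpt]
  rw [integral_finsetSum _ fun i _ => integrable_finsetSum _ fun j _ => (hf i j).const_mul _]
  simp only [dotProduct, mulVec, of_apply, Finset.mul_sum]
  refine Finset.sum_congr rfl fun i _ => ?_
  rw [integral_finsetSum _ fun j _ => (hf i j).const_mul _]
  refine Finset.sum_congr rfl fun j _ => ?_
  rw [integral_const_mul]
  ring

omit [Fintype ι] in
lemma isHermitian_integral_mul (f : Ω → ι → ℝ) :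
    (of fun i j => ∫ ω, f ω i * f ω j ∂μ).IsHermitian := by
  ext i j
  simp only [conjTranspose_apply, star_trivial, of_apply, mul_comm]

lemma posSemidef_integral_mul {f : Ω → ι → ℝ}
    (hf : ∀ i j, Integrable (fun ω => f ω i * f ω j) μ) :
    (of fun i j => ∫ ω, f ω i * f ω j ∂μ).PosSemidef :=
  .of_dotProduct_mulVec_nonneg (isHermitian_integral_mul f) fun x => by
    rw [star_trivial, dotProduct_mulVec_integral_mul hf]
    exact integral_nonneg fun ω => mul_self_nonneg _

lemma posSemidef_fromBlocks_integral_mul_weight {V : Ω → ι → ℝ} {R : Ω → ℝ}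
    (hR : ∀ ω, 0 < R ω) (hVR : ∀ i j, Integrable (fun ω => V ω i * V ω j * R ω) μ)
    (hVV : ∀ i j, Integrable (fun ω => V ω i * V ω j) μ)
    (hV_R : ∀ i j, Integrable (fun ω => V ω i * V ω j / R ω) μ) :
    (fromBlocks (of fun i j => ∫ ω, V ω i * V ω j / R ω ∂μ) (of fun i j => ∫ ω, V ω i * V ω j ∂μ)
      (of fun i j => ∫ ω, V ω i * V ω j ∂μ)
      (of fun i j => ∫ ω, V ω i * V ω j * R ω ∂μ)).PosSemidef := by
  set W : Ω → ι ⊕ ι → ℝ := fun ω => Sum.elim (fun k => V ω k / √(R ω)) (fun k => V ω k * √(R ω))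
  have hWW : ∀ ω a b, W ω a * W ω b = fromBlocks (of fun i j => V ω i * V ω j / R ω)
      (of fun i j => V ω i * V ω j) (of fun i j => V ω i * V ω j)
      (of fun i j => V ω i * V ω j * R ω) a b := by
    intro ω
    have hsqrt : 0 < √(R ω) := Real.sqrt_pos.2 (hR ω)
    have hsq : √(R ω) ^ 2 = R ω := Real.sq_sqrt (hR ω).le
    have hR0 : R ω ≠ 0 := (hR ω).ne'
    rintro (i | i) (j | j) <;> simp only [W, Sum.elim_inl, Sum.elim_inr, fromBlocks_apply₁₁,
      fromBlocks_apply₁₂, fromBlocks_apply₂₁, fromBlocks_apply₂₂, of_apply] <;> field_simp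
    · linear_combination -(V ω i * V ω j) * hsq
    · linear_combination (V ω i * V ω j) * hsq
  have hW : ∀ a b, Integrable (fun ω => W ω a * W ω b) μ := by
    simp_rw [hWW]
    rintro (i | i) (j | j)
    exacts [hV_R i j, hVV i j, hVV i j, hVR i j]
  convert posSemidef_integral_mul hW using 1
  ext (i | i) (j | j) <;> simp only [hWW, fromBlocks_apply₁₁, fromBlocks_apply₁₂,
    fromBlocks_apply₂₁, fromBlocks_apply₂₂, of_apply]

end SecondMoment

theorem stmt12_general
    {n : ℕ} {Ω : Type*} [MeasurableSpace Ω] (P : Measure Ω)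
    (V : Ω → Fin n → ℝ) (R : Ω → ℝ)
    (hRpos : ∀ ω, 0 < R ω)
    (hint1 : ∀ i j, Integrable (fun ω => V ω i * V ω j * R ω) P)
    (hint2 : ∀ i j, Integrable (fun ω => V ω i * V ω j) P)
    (hint3 : ∀ i j, Integrable (fun ω => V ω i * V ω j / R ω) P)
    (hJinv : IsUnit ((Matrix.of fun i j => ∫ ω, V ω i * V ω j ∂P :
        Matrix (Fin n) (Fin n) ℝ)).det)
    (hJRinv : IsUnit ((Matrix.of fun i j => ∫ ω, V ω i * V ω j * R ω ∂P :
        Matrix (Fin n) (Fin n) ℝ)).det) :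
    ((Matrix.of fun i j => ∫ ω, V ω i * V ω j ∂P : Matrix (Fin n) (Fin n) ℝ)⁻¹
        * (Matrix.of fun i j => ∫ ω, V ω i * V ω j / R ω ∂P : Matrix (Fin n) (Fin n) ℝ)
        * (Matrix.of fun i j => ∫ ω, V ω i * V ω j ∂P : Matrix (Fin n) (Fin n) ℝ)⁻¹
      - (Matrix.of fun i j => ∫ ω, V ω i * V ω j * R ω ∂P :
          Matrix (Fin n) (Fin n) ℝ)⁻¹).PosSemidef := by
  have hblocks := posSemidef_fromBlocks_integral_mul_weight hRpos hint1 hint2 hint3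
  refine posSemidef_inv_mul_mul_inv_sub_inv hJinv (isHermitian_integral_mul V)
    ((hblocks.submatrix Sum.inr).posDef_iff_isUnit.2 ((isUnit_iff_isUnit_det _).2 hJRinv)) ?_
  rwa [(isHermitian_integral_mul V).eq]

/-- Let `V : Ω → ℝ^n` be a random vector and `R : Ω → (0,∞)` measurable,
with all entries of `V Vᵀ R`, `V Vᵀ` and `V Vᵀ / R` integrable, and with both
`J = E[V Vᵀ]` and `J_R = E[V Vᵀ R]` invertible. Then
`J⁻¹ E[V Vᵀ / R] J⁻¹ - J_R⁻¹` is positive semi-definite (the matrix inequality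
`V^IS_τ ⪰ V^NCE_τ` for the IID asymptotic variances). -/
theorem stmt12
    {n : ℕ} {Ω : Type*} [MeasurableSpace Ω] (P : Measure Ω) [IsProbabilityMeasure P]
    (V : Ω → Fin n → ℝ) (R : Ω → ℝ)
    (hV : Measurable V) (hR : Measurable R) (hRpos : ∀ ω, 0 < R ω)
    (hint1 : ∀ i j, Integrable (fun ω => V ω i * V ω j * R ω) P)
    (hint2 : ∀ i j, Integrable (fun ω => V ω i * V ω j) P)
    (hint3 : ∀ i j, Integrable (fun ω => V ω i * V ω j / R ω) P)
    (hJinv : IsUnit ((Matrix.of fun i j => ∫ ω, V ω i * V ω j ∂P :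
        Matrix (Fin n) (Fin n) ℝ)).det)
    (hJRinv : IsUnit ((Matrix.of fun i j => ∫ ω, V ω i * V ω j * R ω ∂P :
        Matrix (Fin n) (Fin n) ℝ)).det) :
    ((Matrix.of fun i j => ∫ ω, V ω i * V ω j ∂P : Matrix (Fin n) (Fin n) ℝ)⁻¹
        * (Matrix.of fun i j => ∫ ω, V ω i * V ω j / R ω ∂P : Matrix (Fin n) (Fin n) ℝ)
        * (Matrix.of fun i j => ∫ ω, V ω i * V ω j ∂P : Matrix (Fin n) (Fin n) ℝ)⁻¹
      - (Matrix.of fun i j => ∫ ω, V ω i * V ω j * R ω ∂P :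
          Matrix (Fin n) (Fin n) ℝ)⁻¹).PosSemidef :=
  stmt12_general P V R hRpos hint1 hint2 hint3 hJinv hJRinv
end

section
/- For all positive real numbers a, b, w, u, v: | log((a·w + u)/(a·w + v)) − log((b·w + u)/(b·w + v)) | ≤ | log a − log b |. -/
/-- For positive reals `a, b, w, u, v`,
`|log((a w + u)/(a w + v)) - log((b w + u)/(b w + v))| ≤ |log a - log b|`. -/
theorem stmt14 (a b w u v : ℝ) (ha : 0 < a) (hb : 0 < b) (hw : 0 < w)
    (hu : 0 < u) (hv : 0 < v) :
    |Real.log ((a * w + u) / (a * w + v)) - Real.log ((b * w + u) / (b * w + v))|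
      ≤ |Real.log a - Real.log b| := by
  wlog hab : b ≤ a with H
  · have := H b a w u v hb ha hw hu hv (le_of_not_ge hab)
    rwa [abs_sub_comm, abs_sub_comm (Real.log b)] at this
  have hawu : (0:ℝ) < a*w+u := by positivity
  have hawv : (0:ℝ) < a*w+v := by positivity
  have hbwu : (0:ℝ) < b*w+u := by positivity
  have hbwv : (0:ℝ) < b*w+v := by positivity
  rw [Real.log_div hawu.ne' hawv.ne', Real.log_div hbwu.ne' hbwv.ne',
    abs_of_nonneg (sub_nonneg.2 (Real.log_le_log hb hab)), abs_le]
  have hd := sub_nonneg.2 hab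
  have h1 : b*((a*w+u)*(b*w+v)) ≤ a*((a*w+v)*(b*w+u)) := by
    nlinarith [mul_nonneg hd (by positivity : (0:ℝ) ≤ a*b*w^2 + u*w*(a+b) + u*v)]
  have h2 : b*((a*w+v)*(b*w+u)) ≤ a*((a*w+u)*(b*w+v)) := by
    nlinarith [mul_nonneg hd (by positivity : (0:ℝ) ≤ a*b*w^2 + v*w*(a+b) + u*v)]
  have l1 := Real.log_le_log (by positivity) h1
  have l2 := Real.log_le_log (by positivity) h2
  rw [Real.log_mul hb.ne' (by positivity), Real.log_mul ha.ne' (by positivity),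
    Real.log_mul hawu.ne' hbwv.ne', Real.log_mul hawv.ne' hbwu.ne'] at l1
  rw [Real.log_mul hb.ne' (by positivity), Real.log_mul ha.ne' (by positivity),
    Real.log_mul hawu.ne' hbwv.ne', Real.log_mul hawv.ne' hbwu.ne'] at l2
  constructor <;> linarith
end

section
/- Let μ be a measure on a measurable space E, let S : E → ℝ^d be measurable, let θ ∈ ℝ^d and ε > 0. Suppose that ∫ exp(φᵀ S(x)) μ(dx) < ∞ for every φ ∈ ℝ^d with ‖φ − θ‖_∞ ≤ 3ε. Then ∫ (1 + ‖S(x)‖₁²) · sup_{φ : ‖φ−θ‖_∞ ≤ ε} exp(φᵀ S(x)) μ(dx) < ∞. -/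
open MeasureTheory

lemma sq_le_exp_aux {u : ℝ} (hu : 0 ≤ u) : u ^ 2 ≤ 4 * Real.exp u := by
  have h1 : u / 2 + 1 ≤ Real.exp (u / 2) := Real.add_one_le_exp (u / 2)
  have h3 : Real.exp (u / 2) * Real.exp (u / 2) = Real.exp u := by
    rw [← Real.exp_add]; ring_nf
  nlinarith [mul_self_le_mul_self (by positivity : (0:ℝ) ≤ u / 2 + 1) h1]

/-- If `∫ exp(φᵀ S) dμ < ∞` for every `φ` with `‖φ - θ‖_∞ ≤ 3ε`, then
`∫ (1 + ‖S‖₁²) · sup_{‖φ-θ‖_∞ ≤ ε} exp(φᵀ S) dμ < ∞`. -/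
theorem stmt16
    {E : Type*} [MeasurableSpace E] (μ : Measure E)
    {d : ℕ} (S : E → Fin d → ℝ) (hS : Measurable S)
    (θ : Fin d → ℝ) (ε : ℝ) (hε : 0 < ε)
    (hint : ∀ φ : Fin d → ℝ, (∀ i, |φ i - θ i| ≤ 3 * ε) →
      ∫⁻ x, ENNReal.ofReal (Real.exp (∑ i, φ i * S x i)) ∂μ < ⊤) :
    ∫⁻ x, ENNReal.ofReal ((1 + (∑ i, |S x i|) ^ 2) *
      ⨆ φ : {φ : Fin d → ℝ // ∀ i, |φ i - θ i| ≤ ε},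
        Real.exp (∑ i, (φ : Fin d → ℝ) i * S x i)) ∂μ < ⊤ := by
  have hne : Nonempty {φ : Fin d → ℝ // ∀ i, |φ i - θ i| ≤ ε} :=
    ⟨⟨θ, fun i => by simp [hε.le]⟩⟩
  set C : ℝ := 1 + 4 / ε ^ 2 with hC
  have hC0 : 0 ≤ C := by positivity
  -- the 2^d sign vectors
  set ψ : (Fin d → Bool) → (Fin d → ℝ) :=
    fun s i => θ i + 2 * ε * (if s i then 1 else -1) with hψ
  have hψ3 : ∀ s, ∀ i, |ψ s i - θ i| ≤ 3 * ε := by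
    intro s i
    simp only [hψ]
    rcases Bool.dichotomy (s i) with h | h <;> rw [h] <;> simp <;>
      rw [abs_of_nonneg (by positivity)] <;> nlinarith
  -- pointwise bound
  have key : ∀ x, (1 + (∑ i, |S x i|) ^ 2) *
      (⨆ φ : {φ : Fin d → ℝ // ∀ i, |φ i - θ i| ≤ ε},
        Real.exp (∑ i, (φ : Fin d → ℝ) i * S x i)) ≤
      C * ∑ s : Fin d → Bool, Real.exp (∑ i, ψ s i * S x i) := by
    intro x
    set t : ℝ := ∑ i, |S x i| with ht
    have ht0 : 0 ≤ t := Finset.sum_nonneg fun i _ => abs_nonneg _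
    set a : ℝ := ∑ i, θ i * S x i with ha
    -- sup bound
    have hsup : (⨆ φ : {φ : Fin d → ℝ // ∀ i, |φ i - θ i| ≤ ε},
        Real.exp (∑ i, (φ : Fin d → ℝ) i * S x i)) ≤ Real.exp (a + ε * t) := by
      apply ciSup_le
      rintro ⟨φ, hφ⟩
      apply Real.exp_le_exp.mpr
      have : ∑ i, φ i * S x i - a = ∑ i, (φ i - θ i) * S x i := by
        rw [ha, ← Finset.sum_sub_distrib]; congr 1; ext i; ring
      have hle : ∑ i, (φ i - θ i) * S x i ≤ ε * t := by
        rw [ht, Finset.mul_sum]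
        apply Finset.sum_le_sum
        intro i _
        calc (φ i - θ i) * S x i ≤ |(φ i - θ i) * S x i| := le_abs_self _
          _ = |φ i - θ i| * |S x i| := abs_mul _ _
          _ ≤ ε * |S x i| := mul_le_mul_of_nonneg_right (hφ i) (abs_nonneg _)
      linarith [this ▸ hle]
    -- quadratic bound
    have hquad : 1 + t ^ 2 ≤ C * Real.exp (ε * t) := by
      have h1 : (1 : ℝ) ≤ Real.exp (ε * t) := Real.one_le_exp (by positivity)
      have h2 : (ε * t) ^ 2 ≤ 4 * Real.exp (ε * t) := sq_le_exp_aux (by positivity)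
      have h3 : t ^ 2 ≤ 4 / ε ^ 2 * Real.exp (ε * t) := by
        rw [div_mul_eq_mul_div, le_div_iff₀ (by positivity)]
        nlinarith
      rw [hC]; nlinarith
    -- sign vector bound
    have hsign : Real.exp (a + 2 * ε * t) ≤
        ∑ s : Fin d → Bool, Real.exp (∑ i, ψ s i * S x i) := by
      set s₀ : Fin d → Bool := fun i => decide (0 ≤ S x i) with hs₀
      have heq : ∑ i, ψ s₀ i * S x i = a + 2 * ε * t := by
        rw [ha, ht, Finset.mul_sum, ← Finset.sum_add_distrib]
        apply Finset.sum_congr rfl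
        intro i _
        simp only [hψ, hs₀]
        simp only [decide_eq_true_eq]
        rcases le_or_gt 0 (S x i) with h | h
        · rw [if_pos h, abs_of_nonneg h]; ring
        · rw [if_neg (not_le.mpr h), abs_of_neg h]; ring
      calc Real.exp (a + 2 * ε * t) = Real.exp (∑ i, ψ s₀ i * S x i) := by rw [heq]
        _ ≤ _ := Finset.single_le_sum (f := fun s => Real.exp (∑ i, ψ s i * S x i))
            (fun s _ => (Real.exp_pos _).le) (Finset.mem_univ s₀)
    calc (1 + t ^ 2) * (⨆ φ : {φ : Fin d → ℝ // ∀ i, |φ i - θ i| ≤ ε},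
          Real.exp (∑ i, (φ : Fin d → ℝ) i * S x i))
        ≤ (1 + t ^ 2) * Real.exp (a + ε * t) :=
          mul_le_mul_of_nonneg_left hsup (by positivity)
      _ ≤ (C * Real.exp (ε * t)) * Real.exp (a + ε * t) :=
          mul_le_mul_of_nonneg_right hquad (Real.exp_pos _).le
      _ = C * Real.exp (a + 2 * ε * t) := by rw [mul_assoc, ← Real.exp_add]; ring_nf
      _ ≤ _ := mul_le_mul_of_nonneg_left hsign hC0
  -- integral bound
  have hmono : ∫⁻ x, ENNReal.ofReal ((1 + (∑ i, |S x i|) ^ 2) *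
      ⨆ φ : {φ : Fin d → ℝ // ∀ i, |φ i - θ i| ≤ ε},
        Real.exp (∑ i, (φ : Fin d → ℝ) i * S x i)) ∂μ ≤
      ∫⁻ x, ENNReal.ofReal (C * ∑ s : Fin d → Bool,
        Real.exp (∑ i, ψ s i * S x i)) ∂μ :=
    lintegral_mono fun x => ENNReal.ofReal_le_ofReal (key x)
  apply lt_of_le_of_lt hmono
  have hrw : ∀ x, ENNReal.ofReal (C * ∑ s : Fin d → Bool,
      Real.exp (∑ i, ψ s i * S x i)) =
      ENNReal.ofReal C * ∑ s : Fin d → Bool,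
        ENNReal.ofReal (Real.exp (∑ i, ψ s i * S x i)) := by
    intro x
    rw [ENNReal.ofReal_mul hC0,
      ENNReal.ofReal_sum_of_nonneg (fun s _ => (Real.exp_pos _).le)]
  simp_rw [hrw]
  rw [lintegral_const_mul' _ _ ENNReal.ofReal_ne_top]
  apply ENNReal.mul_lt_top ENNReal.ofReal_lt_top
  rw [lintegral_finset_sum']
  · exact ENNReal.sum_lt_top.mpr fun s _ => hint (ψ s) (hψ3 s)
  · intro s _
    apply Measurable.aemeasurable
    apply ENNReal.measurable_ofReal.comp
    exact (Real.measurable_exp.comp (Finset.measurable_sum _ fun i _ =>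
      (measurable_const.mul ((measurable_pi_apply i).comp hS))))
end

section
/- Let μ be a measure on a measurable space E, let S : E → ℝ^d be measurable, let h_ψ : E → (0, ∞) be measurable, let θ ∈ ℝ^d and ε > 0. Suppose that ∫ exp(2·φᵀ S(x)) / h_ψ(x) μ(dx) < ∞ for every φ ∈ ℝ^d with ‖φ − θ‖_∞ ≤ 2ε. Then ∫ (1 + ‖S(x)‖₁) · sup_{φ : ‖φ−θ‖_∞ ≤ ε} { exp(2·φᵀ S(x)) / h_ψ(x) } μ(dx) < ∞. -/
open MeasureTheory

/-- If `∫ exp(2 φᵀ S)/h_ψ dμ < ∞` for every `φ` with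
`‖φ - θ‖_∞ ≤ 2ε`, then `∫ (1 + ‖S‖₁) · sup_{‖φ-θ‖_∞ ≤ ε} { exp(2 φᵀ S)/h_ψ } dμ < ∞`. -/
theorem stmt18
    {E : Type*} [MeasurableSpace E] (μ : Measure E)
    {d : ℕ} (S : E → Fin d → ℝ) (hS : Measurable S)
    (hψ : E → ℝ) (hψmeas : Measurable hψ) (hψpos : ∀ x, 0 < hψ x)
    (θ : Fin d → ℝ) (ε : ℝ) (hε : 0 < ε)
    (hint : ∀ φ : Fin d → ℝ, (∀ i, |φ i - θ i| ≤ 2 * ε) →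
      ∫⁻ x, ENNReal.ofReal (Real.exp (2 * ∑ i, φ i * S x i) / hψ x) ∂μ < ⊤) :
    ∫⁻ x, ENNReal.ofReal ((1 + ∑ i, |S x i|) *
      ⨆ φ : {φ : Fin d → ℝ // ∀ i, |φ i - θ i| ≤ ε},
        Real.exp (2 * ∑ i, (φ : Fin d → ℝ) i * S x i) / hψ x) ∂μ < ⊤ := by
  classical
  set C : ℝ := 1 + 1 / (2 * ε) with hCdef
  have hC : 0 ≤ C := by positivity
  -- corner points of the 2ε-ball
  set v : (Fin d → Bool) → Fin d → ℝ :=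
    fun σ i => θ i + if σ i then 2 * ε else -(2 * ε) with hv
  have hvball : ∀ σ, ∀ i, |v σ i - θ i| ≤ 2 * ε := by
    intro σ i
    simp only [hv, add_sub_cancel_left]
    split <;> simp [abs_of_nonneg, abs_of_nonpos, le_of_lt hε, (by linarith : (0:ℝ) ≤ 2 * ε)]
  set g : (Fin d → Bool) → E → ℝ :=
    fun σ x => Real.exp (2 * ∑ i, v σ i * S x i) / hψ x with hg
  have hgnonneg : ∀ σ x, 0 ≤ g σ x := fun σ x => by
    have := (hψpos x).le
    positivity
  have hgmeas : ∀ σ, Measurable fun x => ENNReal.ofReal (g σ x) := by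
    intro σ
    apply Measurable.ennreal_ofReal
    exact (Real.measurable_exp.comp (measurable_const.mul
      (Finset.measurable_sum _ fun i _ =>
        measurable_const.mul ((measurable_pi_apply i).comp hS)))).div hψmeas
  haveI : Nonempty {φ : Fin d → ℝ // ∀ i, |φ i - θ i| ≤ ε} :=
    ⟨⟨θ, fun i => by simp [le_of_lt hε]⟩⟩
  -- pointwise bound
  have key : ∀ x, (1 + ∑ i, |S x i|) *
      (⨆ φ : {φ : Fin d → ℝ // ∀ i, |φ i - θ i| ≤ ε},
        Real.exp (2 * ∑ i, (φ : Fin d → ℝ) i * S x i) / hψ x)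
      ≤ C * ∑ σ : Fin d → Bool, g σ x := by
    intro x
    set t : ℝ := ∑ i, |S x i| with ht
    have htnn : 0 ≤ t := Finset.sum_nonneg fun i _ => abs_nonneg _
    set A : ℝ := ∑ i, θ i * S x i with hA
    have hψx := hψpos x
    -- sup bound
    have hsup : (⨆ φ : {φ : Fin d → ℝ // ∀ i, |φ i - θ i| ≤ ε},
        Real.exp (2 * ∑ i, (φ : Fin d → ℝ) i * S x i) / hψ x)
        ≤ Real.exp (2 * (A + ε * t)) / hψ x := by
      apply ciSup_le
      rintro ⟨φ, hφ⟩
      have hsum : ∑ i, φ i * S x i ≤ A + ε * t := by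
        have : ∑ i, φ i * S x i - A = ∑ i, (φ i - θ i) * S x i := by
          rw [hA, ← Finset.sum_sub_distrib]
          exact Finset.sum_congr rfl fun i _ => by ring
        have hb : ∑ i, (φ i - θ i) * S x i ≤ ε * t := by
          rw [ht, Finset.mul_sum]
          apply Finset.sum_le_sum
          intro i _
          calc (φ i - θ i) * S x i ≤ |(φ i - θ i) * S x i| := le_abs_self _
            _ = |φ i - θ i| * |S x i| := abs_mul _ _
            _ ≤ ε * |S x i| := by
                apply mul_le_mul_of_nonneg_right (hφ i) (abs_nonneg _)
        linarith
      gcongr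
    -- 1 + t ≤ C * exp(2 ε t)
    have hCt : 1 + t ≤ C * Real.exp (2 * ε * t) := by
      have h1 : (1:ℝ) ≤ Real.exp (2 * ε * t) := Real.one_le_exp (by positivity)
      have h2 : 2 * ε * t ≤ Real.exp (2 * ε * t) := by
        have := Real.add_one_le_exp (2 * ε * t); linarith
      rw [hCdef]
      have h2e : (0:ℝ) < 2 * ε := by linarith
      have : t ≤ Real.exp (2 * ε * t) / (2 * ε) := by
        rw [le_div_iff₀ h2e]; linarith [h2]
      have hexp : 0 < Real.exp (2 * ε * t) := Real.exp_pos _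
      calc 1 + t ≤ Real.exp (2 * ε * t) + Real.exp (2 * ε * t) / (2 * ε) := by linarith
        _ = (1 + 1 / (2 * ε)) * Real.exp (2 * ε * t) := by field_simp
    -- corner choice
    set σ₀ : Fin d → Bool := fun i => decide (0 ≤ S x i) with hσ₀
    have hcorner : Real.exp (2 * (A + ε * t)) * Real.exp (2 * ε * t) / hψ x = g σ₀ x := by
      rw [hg, ← Real.exp_add]
      congr 2
      have : ∑ i, v σ₀ i * S x i = A + 2 * ε * t := by
        rw [hA, ht, Finset.mul_sum, ← Finset.sum_add_distrib]
        apply Finset.sum_congr rfl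
        intro i _
        simp only [hv, hσ₀]
        rcases le_or_gt 0 (S x i) with h | h
        · rw [if_pos (by simpa using h), abs_of_nonneg h]; ring
        · rw [if_neg (by simpa using not_le.mpr h), abs_of_neg h]; ring
      rw [this]; ring
    have hsum : g σ₀ x ≤ ∑ σ : Fin d → Bool, g σ x :=
      Finset.single_le_sum (fun σ _ => hgnonneg σ x) (Finset.mem_univ σ₀)
    have hsupnn : 0 ≤ ⨆ φ : {φ : Fin d → ℝ // ∀ i, |φ i - θ i| ≤ ε},
        Real.exp (2 * ∑ i, (φ : Fin d → ℝ) i * S x i) / hψ x :=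
      Real.iSup_nonneg fun φ => by positivity
    calc (1 + t) * (⨆ φ : {φ : Fin d → ℝ // ∀ i, |φ i - θ i| ≤ ε},
          Real.exp (2 * ∑ i, (φ : Fin d → ℝ) i * S x i) / hψ x)
        ≤ (C * Real.exp (2 * ε * t)) * (Real.exp (2 * (A + ε * t)) / hψ x) := by
          apply mul_le_mul hCt hsup hsupnn
          have := Real.exp_pos (2 * ε * t); positivity
      _ = C * (Real.exp (2 * (A + ε * t)) * Real.exp (2 * ε * t) / hψ x) := by ring
      _ = C * g σ₀ x := by rw [hcorner]
      _ ≤ C * ∑ σ : Fin d → Bool, g σ x := by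
          apply mul_le_mul_of_nonneg_left hsum hC
  -- integrate
  calc ∫⁻ x, ENNReal.ofReal ((1 + ∑ i, |S x i|) *
      ⨆ φ : {φ : Fin d → ℝ // ∀ i, |φ i - θ i| ≤ ε},
        Real.exp (2 * ∑ i, (φ : Fin d → ℝ) i * S x i) / hψ x) ∂μ
      ≤ ∫⁻ x, ENNReal.ofReal (C * ∑ σ : Fin d → Bool, g σ x) ∂μ :=
        lintegral_mono fun x => ENNReal.ofReal_le_ofReal (key x)
    _ = ∫⁻ x, ENNReal.ofReal C * ENNReal.ofReal (∑ σ : Fin d → Bool, g σ x) ∂μ := by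
        simp_rw [ENNReal.ofReal_mul hC]
    _ = ENNReal.ofReal C * ∫⁻ x, ENNReal.ofReal (∑ σ : Fin d → Bool, g σ x) ∂μ :=
        lintegral_const_mul' _ _ ENNReal.ofReal_ne_top
    _ = ENNReal.ofReal C * ∫⁻ x, ∑ σ : Fin d → Bool, ENNReal.ofReal (g σ x) ∂μ := by
        congr 1
        apply lintegral_congr
        intro x
        exact ENNReal.ofReal_sum_of_nonneg fun σ _ => hgnonneg σ x
    _ = ENNReal.ofReal C * ∑ σ : Fin d → Bool, ∫⁻ x, ENNReal.ofReal (g σ x) ∂μ := by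
        congr 1
        exact lintegral_finset_sum _ fun σ _ => hgmeas σ
    _ < ⊤ := by
        apply ENNReal.mul_lt_top ENNReal.ofReal_lt_top
        apply ENNReal.sum_lt_top.mpr
        intro σ _
        exact hint (v σ) (hvball σ)
end
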